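/- arXiv:0906.0887 — 7 statements merged into one kernel-verified Lean document; each statement's English description precedes it below -/
import Mathlib

section
/- Let B ⊆ ℝ² be a closed, convex, lattice-free set with f in the interior of B. Suppose φ ∈ ℝ^k satisfies, for each i ∈ {1,…,k}: either rⁱ lies in the recession cone of B (i.e., B + λrⁱ ⊆ B for all λ ≥ 0) and φᵢ = 0, or φᵢ > 0 and f + rⁱ/φᵢ lies on the topological boundary of B. Then every point (x,s) ∈ P(R,f) satisfies ∑_{i=1}^k φᵢ sᵢ ≥ 1; that is, ∑_{i=1}^k φᵢ sᵢ ≥ 1 is a valid inequality for conv(P(R,f)). -/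
open Set Pointwise

abbrev Pt : Type := Fin 2 → ℝ

def IsIntPt (x : Pt) : Prop := ∀ j, ∃ z : ℤ, x j = (z : ℝ)

def IsRatPt (x : Pt) : Prop := ∀ j, ∃ q : ℚ, x j = (q : ℝ)

/-- The mixed-integer set `P(R,f)`. -/
def mixedP (k : ℕ) (r : Fin k → Pt) (f : Pt) : Set (Pt × (Fin k → ℝ)) :=
  {p | IsIntPt p.1 ∧ (∀ i, 0 ≤ p.2 i) ∧ p.1 = f + ∑ i, p.2 i • r i}

/-- The linear relaxation `P(R,f)⁰`. -/
def relaxP (k : ℕ) (r : Fin k → Pt) (f : Pt) : Set (Pt × (Fin k → ℝ)) :=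
  {p | (∀ i, 0 ≤ p.2 i) ∧ p.1 = f + ∑ i, p.2 i • r i}

/-- The convex cone generated by a set (all nonnegative combinations). -/
def coneGen (S : Set Pt) : Set Pt :=
  {x | ∃ (n : ℕ) (c : Fin n → ℝ) (v : Fin n → Pt),
    (∀ j, 0 ≤ c j) ∧ (∀ j, v j ∈ S) ∧ x = ∑ j, c j • v j}

/-- The induced lattice-free set `L_α`. -/
def inducedSet (k : ℕ) (r : Fin k → Pt) (f : Pt) (α : Fin k → ℝ) : Set Pt :=
  convexHull ℝ ({f} ∪ {x | ∃ i, 0 < α i ∧ x = f + (α i)⁻¹ • r i}) +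
    coneGen {x | ∃ i, α i = 0 ∧ x = r i}

def LatticeFree (S : Set Pt) : Prop := ∀ x ∈ interior S, ¬ IsIntPt x

/-- Validity of `∑ αᵢ sᵢ ≥ γ` for `conv(P(R,f))`. -/
def ValidIneq (k : ℕ) (r : Fin k → Pt) (f : Pt) (α : Fin k → ℝ) (γ : ℝ) : Prop :=
  ∀ p ∈ mixedP k r f, γ ≤ ∑ i, α i * p.2 i

noncomputable def affDim {V : Type*} [AddCommGroup V] [Module ℝ V] (S : Set V) : ℕ :=
  Module.finrank ℝ (affineSpan ℝ S).direction

/-- Facet-defining inequality: valid and its face of the closed convex hull has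
affine dimension exactly one less. -/
def IsFacet (k : ℕ) (r : Fin k → Pt) (f : Pt) (α : Fin k → ℝ) (γ : ℝ) : Prop :=
  ValidIneq k r f α γ ∧
  affDim {p ∈ closure (convexHull ℝ (mixedP k r f)) | ∑ i, α i * p.2 i = γ} + 1 =
    affDim (convexHull ℝ (mixedP k r f))

def splitClosure (k : ℕ) (C : Set (Pt × (Fin k → ℝ))) : Set (Pt × (Fin k → ℝ)) :=
  ⋂ (π : Fin 2 → ℤ) (π₀ : ℤ),
    convexHull ℝ ((C ∩ {p | ∑ j, (π j : ℝ) * p.1 j ≤ (π₀ : ℝ)}) ∪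
      (C ∩ {p | (π₀ : ℝ) + 1 ≤ ∑ j, (π j : ℝ) * p.1 j}))

def closures (k : ℕ) (r : Fin k → Pt) (f : Pt) : ℕ → Set (Pt × (Fin k → ℝ))
  | 0 => relaxP k r f
  | n + 1 => splitClosure k (closures k r f n)

/-- The split rank of `∑ αᵢ sᵢ ≥ γ` w.r.t. `P(R,f)⁰`: least `j` such that the
inequality is valid on the `j`-th split closure, `⊤` if none exists. -/
noncomputable def splitRank (k : ℕ) (r : Fin k → Pt) (f : Pt) (α : Fin k → ℝ) (γ : ℝ) : ℕ∞ :=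
  sInf {j : ℕ∞ | ∃ n : ℕ, j = (n : ℕ∞) ∧ ∀ p ∈ closures k r f n, γ ≤ ∑ i, α i * p.2 i}

def IsSplitSet (S : Set Pt) : Prop :=
  ∃ (π : Fin 2 → ℤ) (π₀ : ℤ), π ≠ 0 ∧
    S = {x : Pt | (π₀ : ℝ) ≤ ∑ j, (π j : ℝ) * x j ∧ ∑ j, (π j : ℝ) * x j ≤ (π₀ : ℝ) + 1}

/-- Triangle of type `T¹`. -/
def IsT1 (S : Set Pt) : Prop :=
  ∃ v : Fin 3 → Pt, AffineIndependent ℝ v ∧ (∀ i, IsIntPt (v i)) ∧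
    S = convexHull ℝ (Set.range v) ∧
    ∀ i j, i ≠ j → ∃! z, z ∈ openSegment ℝ (v i) (v j) ∧ IsIntPt z

/-- Triangle of type `T^{2A}`. -/
def IsT2A (S : Set Pt) : Prop :=
  ∃ v0 v1 v2 : Pt, AffineIndependent ℝ ![v0, v1, v2] ∧ ¬ IsIntPt v0 ∧
    S = convexHull ℝ {v0, v1, v2} ∧
    (∃ z1 z2 : Pt, z1 ≠ z2 ∧ IsIntPt z1 ∧ IsIntPt z2 ∧
      z1 ∈ segment ℝ v1 v2 ∧ z2 ∈ segment ℝ v1 v2) ∧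
    (∃! z, z ∈ openSegment ℝ v0 v1 ∧ IsIntPt z) ∧
    (∃! z, z ∈ openSegment ℝ v0 v2 ∧ IsIntPt z)

/-- Triangle of type `T^{2B}`. -/
def IsT2B (S : Set Pt) : Prop :=
  ∃ v0 v1 v2 : Pt, AffineIndependent ℝ ![v0, v1, v2] ∧ ¬ IsIntPt v0 ∧
    S = convexHull ℝ {v0, v1, v2} ∧
    (∃ z1 z2 : Pt, z1 ≠ z2 ∧ IsIntPt z1 ∧ IsIntPt z2 ∧
      z1 ∈ segment ℝ v1 v2 ∧ z2 ∈ segment ℝ v1 v2) ∧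
    (∃! z, z ∈ openSegment ℝ v0 v1 ∧ IsIntPt z) ∧
    (∀ z ∈ openSegment ℝ v0 v2, ¬ IsIntPt z)

/-- Triangle of type `T³`. -/
def IsT3 (S : Set Pt) : Prop :=
  ∃ v0 v1 v2 : Pt, AffineIndependent ℝ ![v0, v1, v2] ∧
    ¬ IsIntPt v0 ∧ ¬ IsIntPt v1 ∧ ¬ IsIntPt v2 ∧
    S = convexHull ℝ {v0, v1, v2} ∧
    (∃! z, z ∈ openSegment ℝ v0 v1 ∧ IsIntPt z) ∧
    (∃! z, z ∈ openSegment ℝ v1 v2 ∧ IsIntPt z) ∧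
    (∃! z, z ∈ openSegment ℝ v0 v2 ∧ IsIntPt z) ∧
    (∀ z, IsIntPt z → z ∈ frontier S →
      z ∈ openSegment ℝ v0 v1 ∨ z ∈ openSegment ℝ v1 v2 ∨ z ∈ openSegment ℝ v0 v2)

/-- A quadrilateral with vertices `v 0, v 1, v 2, v 3` in cyclic order; each `vᵢ`
is an extreme point of the hull and each side lies on the boundary. -/
def IsQuadWith (S : Set Pt) (v : Fin 4 → Pt) : Prop :=
  S = convexHull ℝ (Set.range v) ∧
  (∀ i, v i ∈ Set.extremePoints ℝ S) ∧
  (∀ i : Fin 4, segment ℝ (v i) (v (i + 1)) ⊆ frontier S)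

/-- Quadrilateral of type `Q¹`. -/
def IsQ1 (S : Set Pt) : Prop :=
  ∃ v : Fin 4 → Pt, IsQuadWith S v ∧
    (∃ z1 z2 : Pt, z1 ≠ z2 ∧ IsIntPt z1 ∧ IsIntPt z2 ∧
      z1 ∈ segment ℝ (v 0) (v 1) ∧ z2 ∈ segment ℝ (v 0) (v 1)) ∧
    (∃ j : Fin 4, j ≠ 0 ∧
      (∀ i : Fin 4, i ≠ 0 → i ≠ j → ∃ z, IsIntPt z ∧ z ∈ segment ℝ (v i) (v (i + 1))) ∧
      (∀ z ∈ openSegment ℝ (v j) (v (j + 1)), ¬ IsIntPt z)) ∧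
    (∃ T : Set Pt, (IsT1 T ∨ IsT2A T) ∧ S ⊆ T)

/-- Quadrilateral of type `Q²`. -/
def IsQ2 (S : Set Pt) : Prop :=
  ∃ v : Fin 4 → Pt, IsQuadWith S v ∧ (∀ i, ¬ IsIntPt (v i)) ∧
    ∀ i : Fin 4, ∃! z, z ∈ openSegment ℝ (v i) (v (i + 1)) ∧ IsIntPt z

/-! If `t = ∑ φᵢ sᵢ < 1`, split each `sᵢ rⁱ`: when `φᵢ > 0` it is `φᵢ sᵢ (yᵢ - f)` with
`yᵢ = f + rⁱ / φᵢ` in the closure of `B`, and when `φᵢ = 0` it is a recession direction of `B`.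
The first parts add up to `t (z - f)` for a convex combination `z` of the `yᵢ`, and
`f + t (z - f)` is interior to `B` because `f` is and `t < 1`; translating by recession
directions keeps interior points interior. So `f + ∑ sᵢ rⁱ` would be an integer point in the
interior of the lattice-free set `B`. -/

section ConvexCombination

variable {𝕜 E ι : Type*} [Field 𝕜] [LinearOrder 𝕜] [IsStrictOrderedRing 𝕜]
  [AddCommGroup E] [Module 𝕜 E] {s : Set E} {x : E} {t : Finset ι} {w : ι → 𝕜} {y : ι → E}

theorem Convex.exists_mem_sum_smul_sub_eq_sum_smul_sub (hs : Convex 𝕜 s) (hx : x ∈ s)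
    (hw : ∀ i ∈ t, 0 ≤ w i) (hy : ∀ i ∈ t, y i ∈ s) :
    ∃ z ∈ s, ∑ i ∈ t, w i • (y i - x) = (∑ i ∈ t, w i) • (z - x) := by
  rcases (Finset.sum_nonneg hw).eq_or_lt with hzero | hpos
  · refine ⟨x, hx, ?_⟩
    rw [← hzero, zero_smul]
    refine Finset.sum_eq_zero fun i hi => ?_
    rw [(Finset.sum_eq_zero_iff_of_nonneg hw).mp hzero.symm i hi, zero_smul]
  · refine ⟨t.centerMass w y, hs.centerMass_mem hw hpos hy, ?_⟩
    simp only [Finset.centerMass, smul_sub, smul_smul, mul_inv_cancel₀ hpos.ne', one_smul,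
      Finset.sum_sub_distrib, Finset.sum_smul]

variable [TopologicalSpace E] [IsTopologicalAddGroup E] [ContinuousConstSMul 𝕜 E]

theorem Convex.add_sum_smul_sub_mem_interior (hs : Convex 𝕜 s) (hx : x ∈ interior s)
    (hw : ∀ i ∈ t, 0 ≤ w i) (hw₁ : ∑ i ∈ t, w i < 1) (hy : ∀ i ∈ t, y i ∈ closure s) :
    x + ∑ i ∈ t, w i • (y i - x) ∈ interior s := by
  obtain ⟨z, hz, hsum⟩ := hs.closure.exists_mem_sum_smul_sub_eq_sum_smul_sub
    (interior_subset_closure hx) hw hy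
  have h := hs.combo_interior_closure_mem_interior hx hz (sub_pos.mpr hw₁)
    (Finset.sum_nonneg hw) (sub_add_cancel _ _)
  rw [hsum]
  convert h using 1
  module

end ConvexCombination

section Translations

variable {E : Type*}

def translationSubmonoid [AddMonoid E] (B : Set E) : AddSubmonoid E where
  carrier := {v | ∀ x ∈ B, x + v ∈ B}
  zero_mem' x hx := by rwa [add_zero]
  add_mem' hu hv x hx := by rw [← add_assoc]; exact hv _ (hu x hx)

theorem translationSubmonoid_le_interior [AddGroup E] [TopologicalSpace E] [ContinuousAdd E]
    (B : Set E) : translationSubmonoid B ≤ translationSubmonoid (interior B) := by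
  intro v hv x hx
  have hopen : IsOpen ((· + v) '' interior B) := isOpenMap_add_right v _ isOpen_interior
  refine interior_maximal ?_ hopen ⟨x, hx, rfl⟩
  rintro _ ⟨y, hy, rfl⟩
  exact hv y (interior_subset hy)

end Translations

section IntersectionCut

variable {E ι : Type*} [AddCommGroup E] [Module ℝ E] [TopologicalSpace E] {B : Set E} {f : E}

theorem exists_smul_eq_smul_sub_add_translation {r : E} {φ s : ℝ} (hf : f ∈ closure B)
    (hs : 0 ≤ s)
    (hφ : (φ = 0 ∧ ∀ lam : ℝ, 0 ≤ lam → ∀ x ∈ B, x + lam • r ∈ B) ∨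
      (0 < φ ∧ f + φ⁻¹ • r ∈ frontier B)) :
    ∃ y ∈ closure B, ∃ d ∈ translationSubmonoid B, s • r = (φ * s) • (y - f) + d := by
  rcases hφ with ⟨rfl, hrec⟩ | ⟨hpos, hfr⟩
  · exact ⟨f, hf, s • r, hrec s hs, by simp⟩
  · refine ⟨f + φ⁻¹ • r, frontier_subset_closure hfr, 0, zero_mem _, ?_⟩
    rw [add_sub_cancel_left, smul_smul, add_zero, mul_right_comm, mul_inv_cancel₀ hpos.ne',
      one_mul]

variable [IsTopologicalAddGroup E] [ContinuousSMul ℝ E]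

theorem add_sum_smul_mem_interior [Fintype ι] (hB : Convex ℝ B) (hf : f ∈ interior B)
    (r : ι → E) (φ s : ι → ℝ) (hs : ∀ i, 0 ≤ s i)
    (hφ : ∀ i, (φ i = 0 ∧ ∀ lam : ℝ, 0 ≤ lam → ∀ x ∈ B, x + lam • r i ∈ B) ∨
      (0 < φ i ∧ f + (φ i)⁻¹ • r i ∈ frontier B))
    (hlt : ∑ i, φ i * s i < 1) :
    f + ∑ i, s i • r i ∈ interior B := by
  choose y hy d hd hsr using fun i =>
    exists_smul_eq_smul_sub_add_translation (interior_subset_closure hf) (hs i) (hφ i)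
  have hw : ∀ i, 0 ≤ φ i * s i := fun i =>
    mul_nonneg ((hφ i).elim (fun h => h.1.ge) (fun h => h.1.le)) (hs i)
  have hconv : f + ∑ i, (φ i * s i) • (y i - f) ∈ interior B :=
    hB.add_sum_smul_sub_mem_interior hf (fun i _ => hw i) hlt (fun i _ => hy i)
  have htrans : ∑ i, d i ∈ translationSubmonoid (interior B) :=
    sum_mem fun i _ => translationSubmonoid_le_interior B (hd i)
  rw [Finset.sum_congr rfl fun i _ => hsr i, Finset.sum_add_distrib, ← add_assoc]
  exact htrans _ hconv

end IntersectionCut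

theorem intersection_cut_valid_general (k : ℕ)
    (r : Fin k → Pt) (f : Pt)
    (B : Set Pt) (hBconv : Convex ℝ B)
    (hBfree : LatticeFree B) (hfB : f ∈ interior B)
    (φ : Fin k → ℝ)
    (hφ : ∀ i,
      (φ i = 0 ∧ ∀ lam : ℝ, 0 ≤ lam → ∀ x ∈ B, x + lam • r i ∈ B) ∨
      (0 < φ i ∧ f + (φ i)⁻¹ • r i ∈ frontier B)) :
    ∀ p ∈ mixedP k r f, 1 ≤ ∑ i, φ i * p.2 i := by
  intro p ⟨hint, hs, hx⟩
  by_contra! hlt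
  exact hBfree p.1 (hx ▸ add_sum_smul_mem_interior hBconv hfB r φ p.2 hs hφ hlt) hint

theorem intersection_cut_valid (k : ℕ)
    (hk : 1 ≤ k)
    (r : Fin k → Pt) (f : Pt)
    (hr_rat : ∀ i, IsRatPt (r i)) (hr_ne : ∀ i, r i ≠ 0)
    (hf_rat : IsRatPt f) (hf_int : ¬ IsIntPt f)
    (hne : (mixedP k r f).Nonempty)
    (B : Set Pt) (hBclosed : IsClosed B) (hBconv : Convex ℝ B)
    (hBfree : LatticeFree B) (hfB : f ∈ interior B)
    (φ : Fin k → ℝ)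
    (hφ : ∀ i,
      (φ i = 0 ∧ ∀ lam : ℝ, 0 ≤ lam → ∀ x ∈ B, x + lam • r i ∈ B) ∨
      (0 < φ i ∧ f + (φ i)⁻¹ • r i ∈ frontier B)) :
    ∀ p ∈ mixedP k r f, 1 ≤ ∑ i, φ i * p.2 i :=
  intersection_cut_valid_general k r f B hBconv hBfree hfB φ hφ
end

section
/- If ∑_{i=1}^k αᵢ sᵢ ≥ 1 with α ∈ ℝ^k, α ≥ 0, is a valid inequality for conv(P(R,f)), then the induced set L_α := conv({f} ∪ {f + rⁱ/αᵢ : αᵢ > 0}) + cone{rⁱ : αᵢ = 0} is convex and lattice-free. -/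
open Set Pointwise

/-!
Every point of `L_α` can be written as `f + ∑ sᵢ rᵢ` with `s ≥ 0` and `∑ αᵢ sᵢ ≤ 1`: this
representation set is convex, contains `f` and the points `f + rⁱ/αᵢ`, and is stable under adding
rays `rⁱ` with `αᵢ = 0`. An interior point `x` of `L_α` can be pushed away from `f` to
`f + t (x - f) ∈ L_α` with `t > 1`; rescaling its representation by `1/t` writes `x` with
`∑ αᵢ sᵢ < 1`. If `x` were integral, `(x, s)` would lie in `P(R,f)` and violate the inequality.
-/

open Filter Topology

theorem convex_coneGen (S : Set Pt) : Convex ℝ (coneGen S) := by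
  rintro _ ⟨n, c, v, hc, hv, rfl⟩ _ ⟨m, d, w, hd, hw, rfl⟩ a b ha hb -
  refine ⟨n + m, Fin.append (a • c) (b • d), Fin.append v w, fun j => ?_, fun j => ?_, ?_⟩
  · refine Fin.addCases (fun j => ?_) (fun j => ?_) j <;> simp [mul_nonneg, *]
  · refine Fin.addCases (fun j => ?_) (fun j => ?_) j <;> simp [*]
  · simp [Fin.sum_univ_add, Finset.smul_sum, smul_smul]

theorem exists_of_mem_coneGen {ι : Type*} [Fintype ι] {r : ι → Pt} {α : ι → ℝ} {q : Pt}
    (hq : q ∈ coneGen {x | ∃ i, α i = 0 ∧ x = r i}) :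
    ∃ t, 0 ≤ t ∧ α ⬝ᵥ t = 0 ∧ q = ∑ i, t i • r i := by
  classical
  obtain ⟨n, c, v, hc, hv, rfl⟩ := hq
  choose g hαg hvg using hv
  refine ⟨∑ j, c j • Pi.single (g j) 1, ?_, ?_, ?_⟩
  · exact Finset.sum_nonneg fun j _ => smul_nonneg (hc j) (Pi.single_nonneg.2 zero_le_one)
  · simp [dotProduct_sum, dotProduct_smul, hαg]
  · rw [← Fintype.linearCombination_apply ℝ r, map_sum]
    simp [hvg]

section Sublevel

variable {ι E : Type*} [Fintype ι] [AddCommGroup E] [Module ℝ E]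

def sublevelSet (r : ι → E) (f : E) (α : ι → ℝ) : Set E :=
  (fun s => f + ∑ i, s i • r i) '' {s | 0 ≤ s ∧ α ⬝ᵥ s ≤ 1}

theorem convex_sublevelSet (r : ι → E) (f : E) (α : ι → ℝ) :
    Convex ℝ (sublevelSet r f α) := by
  have hA : Convex ℝ {s : ι → ℝ | 0 ≤ s ∧ α ⬝ᵥ s ≤ 1} :=
    (convex_Ici 0).inter <|
      convex_halfSpace_le ⟨dotProduct_add α, fun c s => dotProduct_smul c α s⟩ 1
  convert (hA.linear_image (Fintype.linearCombination ℝ r)).vadd f using 1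
  rw [← Set.image_vadd, Set.image_image]
  simp [sublevelSet, Fintype.linearCombination_apply]

theorem self_mem_sublevelSet (r : ι → E) (f : E) (α : ι → ℝ) : f ∈ sublevelSet r f α :=
  ⟨0, ⟨le_rfl, by simp⟩, by simp⟩

theorem add_inv_smul_mem_sublevelSet (r : ι → E) (f : E) {α : ι → ℝ} {i : ι} (hi : 0 < α i) :
    f + (α i)⁻¹ • r i ∈ sublevelSet r f α := by
  classical
  refine ⟨Pi.single i (α i)⁻¹, ⟨Pi.single_nonneg.2 (inv_nonneg.2 hi.le), ?_⟩, ?_⟩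
  · rw [dotProduct_single, mul_inv_cancel₀ hi.ne']
  · simp [Pi.single_apply]

theorem add_mem_sublevelSet {r : ι → E} {f : E} {α : ι → ℝ} {x : E}
    (hx : x ∈ sublevelSet r f α) {t : ι → ℝ} (ht : 0 ≤ t) (hαt : α ⬝ᵥ t = 0) :
    x + ∑ i, t i • r i ∈ sublevelSet r f α := by
  obtain ⟨s, ⟨hs, hαs⟩, rfl⟩ := hx
  refine ⟨s + t, ⟨add_nonneg hs ht, ?_⟩, ?_⟩
  · rwa [dotProduct_add, hαt, add_zero]
  · simp [add_smul, Finset.sum_add_distrib, add_assoc]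

theorem exists_one_lt_add_smul_sub_mem_of_mem_interior [TopologicalSpace E]
    [IsTopologicalAddGroup E] [ContinuousSMul ℝ E] {S : Set E} {x : E} (hx : x ∈ interior S)
    (f : E) : ∃ t : ℝ, 1 < t ∧ f + t • (x - f) ∈ S := by
  have hnhds : ∀ᶠ t in 𝓝 (1 : ℝ), f + t • (x - f) ∈ interior S := by
    refine (Continuous.continuousAt (by fun_prop)).eventually_mem ?_
    simpa using isOpen_interior.mem_nhds hx
  obtain ⟨t, ht, ht1⟩ := ((hnhds.filter_mono nhdsWithin_le_nhds).and
    (self_mem_nhdsWithin : Set.Ioi (1 : ℝ) ∈ 𝓝[>] 1)).exists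
  exact ⟨t, ht1, interior_subset ht⟩

theorem exists_dotProduct_lt_one_of_mem_interior [TopologicalSpace E]
    [IsTopologicalAddGroup E] [ContinuousSMul ℝ E] {r : ι → E} {f : E} {α : ι → ℝ} {x : E}
    (hx : x ∈ interior (sublevelSet r f α)) :
    ∃ s, 0 ≤ s ∧ α ⬝ᵥ s < 1 ∧ x = f + ∑ i, s i • r i := by
  obtain ⟨t, ht, s, ⟨hs, hαs⟩, hst⟩ := exists_one_lt_add_smul_sub_mem_of_mem_interior hx f
  have ht₀ : 0 < t := by linarith
  refine ⟨t⁻¹ • s, smul_nonneg (inv_nonneg.2 ht₀.le) hs, ?_, ?_⟩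
  · calc α ⬝ᵥ t⁻¹ • s = t⁻¹ * (α ⬝ᵥ s) := dotProduct_smul _ _ _
      _ ≤ t⁻¹ * 1 := by gcongr
      _ < 1 := by rw [mul_one]; exact inv_lt_one_of_one_lt₀ ht
  · have hxf : t • (x - f) = ∑ i, s i • r i := (add_left_cancel hst).symm
    calc x = f + t⁻¹ • (t • (x - f)) := by rw [inv_smul_smul₀ ht₀.ne', add_sub_cancel]
      _ = f + ∑ i, (t⁻¹ • s) i • r i := by simp [hxf, Finset.smul_sum, smul_smul]

end Sublevel

theorem inducedSet_subset_sublevelSet (k : ℕ) (r : Fin k → Pt) (f : Pt) (α : Fin k → ℝ) :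
    inducedSet k r f α ⊆ sublevelSet r f α := by
  rintro _ ⟨p, hp, q, hq, rfl⟩
  obtain ⟨t, ht, hαt, rfl⟩ := exists_of_mem_coneGen hq
  refine add_mem_sublevelSet (convexHull_min ?_ (convex_sublevelSet r f α) hp) ht hαt
  rintro _ (rfl | ⟨i, hi, rfl⟩)
  · exact self_mem_sublevelSet r _ α
  · exact add_inv_smul_mem_sublevelSet r f hi

theorem induced_set_convex_latticeFree_general (k : ℕ)
    (r : Fin k → Pt) (f : Pt)
    (α : Fin k → ℝ)
    (hvalid : ValidIneq k r f α 1) :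
    Convex ℝ (inducedSet k r f α) ∧ LatticeFree (inducedSet k r f α) := by
  refine ⟨(convex_convexHull ℝ _).add (convex_coneGen _), fun x hx hx_int => ?_⟩
  have hx' := interior_mono (inducedSet_subset_sublevelSet k r f α) hx
  obtain ⟨s, hs, hαs, hx_eq⟩ := exists_dotProduct_lt_one_of_mem_interior hx'
  exact (hvalid (x, s) ⟨hx_int, hs, hx_eq⟩).not_gt hαs

theorem induced_set_convex_latticeFree (k : ℕ)
    (hk : 1 ≤ k)
    (r : Fin k → Pt) (f : Pt)
    (hr_rat : ∀ i, IsRatPt (r i)) (hr_ne : ∀ i, r i ≠ 0)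
    (hf_rat : IsRatPt f) (hf_int : ¬ IsIntPt f)
    (hne : (mixedP k r f).Nonempty)
    (α : Fin k → ℝ) (hα : ∀ i, 0 ≤ α i)
    (hvalid : ValidIneq k r f α 1) :
    Convex ℝ (inducedSet k r f α) ∧ LatticeFree (inducedSet k r f α) :=
  induced_set_convex_latticeFree_general k r f α hvalid
end

section
/- Let ∑_{i=1}^k αᵢ sᵢ ≥ 1 with α ∈ ℝ^k, α ≥ 0, be a valid inequality for conv(P(R,f)) such that L_α is not contained in any split set. Then L_α is bounded and αᵢ > 0 for all i = 1,…,k. -/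
open Set Pointwise

/-! If some `αᵢ = 0`, then `L_α` contains, with each of its points, the ray in the rational
direction `rⁱ`. Validity makes `L_α` lattice-free: an integer point in its interior could be
pushed slightly away from `f` and scaled back to a point of `P(R,f)` with `∑ αᵢ sᵢ < 1`.
A lattice-free convex set invariant under a primitive integer direction `(a, b)` cannot straddle
an integer level of `x ↦ a x₁ - b x₀`, because every such level line carries integer points
spaced by `(a, b)`; hence it lies in a split set. So all `αᵢ > 0`, and then `L_α` is the convex
hull of finitely many points. -/

lemma coneGen_eq_hull (S : Set Pt) : coneGen S = PointedCone.hull ℝ S := by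
  ext x
  simp only [coneGen, SetLike.mem_coe, Submodule.mem_span_set', mem_ofPred_eq]
  constructor
  · rintro ⟨n, c, v, hc, hv, rfl⟩
    exact ⟨n, fun j => ⟨c j, hc j⟩, fun j => ⟨v j, hv j⟩, by simp [Nonneg.mk_smul]⟩
  · rintro ⟨n, c, v, rfl⟩
    exact ⟨n, fun j => c j, fun j => v j, fun j => (c j).2, fun j => (v j).2,
      by simp [Nonneg.coe_smul]⟩

def det2 (x y : Pt) : ℝ := x 0 * y 1 - x 1 * y 0

lemma det2_sub_right (d x y : Pt) : det2 d (x - y) = det2 d x - det2 d y := by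
  simp only [det2, Pi.sub_apply]; ring

lemma det2_smul_eq (d e w : Pt) : det2 d e • w = det2 d w • e + det2 w e • d := by
  funext j
  fin_cases j <;>
    simp only [det2, Fin.zero_eta, Fin.mk_one, Pi.smul_apply, smul_eq_mul, Pi.add_apply] <;> ring

/-- The three inequalities say that `z` lies in the open half-strip swept out by the open segment
`(x₁, x₂)` moving in direction `d`. -/
lemma mem_interior_of_mem_halfStrip {C : Set Pt} (hC : Convex ℝ C) {d : Pt}
    (hray : ∀ x ∈ C, ∀ t : ℝ, 0 ≤ t → x + t • d ∈ C) {x₁ x₂ z : Pt} (hx₁ : x₁ ∈ C)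
    (hx₂ : x₂ ∈ C) (hu₀ : 0 < det2 d (z - x₁)) (hu₁ : det2 d (z - x₁) < det2 d (x₂ - x₁))
    (hv : 0 < det2 (z - x₁) (x₂ - x₁)) :
    z ∈ interior C := by
  set D := det2 d (x₂ - x₁)
  have hcont₁ : Continuous fun x : Pt => det2 d (x - x₁) := by unfold det2; fun_prop
  have hcont₂ : Continuous fun x : Pt => det2 (x - x₁) (x₂ - x₁) := by unfold det2; fun_prop
  have hU : IsOpen {x : Pt | 0 < det2 d (x - x₁) ∧ det2 d (x - x₁) < D ∧
      0 < det2 (x - x₁) (x₂ - x₁)} :=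
    (isOpen_lt continuous_const hcont₁).inter
      ((isOpen_lt hcont₁ continuous_const).inter (isOpen_lt continuous_const hcont₂))
  refine interior_maximal ?_ hU ⟨hu₀, hu₁, hv⟩
  rintro x ⟨h₀, h₁, h₂⟩
  have hD : 0 < D := h₀.trans h₁
  obtain ⟨u, hu⟩ : ∃ u, det2 d (x - x₁) = u * D := ⟨_, (div_mul_cancel₀ _ hD.ne').symm⟩
  obtain ⟨v, hv⟩ : ∃ v, det2 (x - x₁) (x₂ - x₁) = v * D := ⟨_, (div_mul_cancel₀ _ hD.ne').symm⟩
  have hx : x = ((1 - u) • x₁ + u • x₂) + v • d := by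
    apply smul_right_injective Pt hD.ne'
    have := det2_smul_eq d (x₂ - x₁) (x - x₁)
    rw [hu, hv] at this
    linear_combination (norm := module) this
  rw [hx]
  refine hray _ (hC hx₁ hx₂ ?_ ?_ (by ring)) _ ?_ <;> nlinarith

lemma exists_isIntPt_mem_interior {C : Set Pt} (hC : Convex ℝ C) {a b : ℤ} (hab : IsCoprime a b)
    (hray : ∀ x ∈ C, ∀ t : ℝ, 0 ≤ t → x + t • ![(a : ℝ), b] ∈ C) {x₁ x₂ : Pt} (hx₁ : x₁ ∈ C)
    (hx₂ : x₂ ∈ C) {m : ℤ} (h₁ : det2 ![(a : ℝ), b] x₁ < m) (h₂ : m < det2 ![(a : ℝ), b] x₂) :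
    ∃ z ∈ interior C, IsIntPt z := by
  set d : Pt := ![(a : ℝ), b]
  obtain ⟨u, v, huv⟩ := hab
  have huvR : (u : ℝ) * a + v * b = 1 := by exact_mod_cast huv
  -- Bézout puts the integer point `z₀` on the level line `det2 d · = m`; integer shifts along `d`
  -- stay on it and eventually reach the half-strip above the segment `[x₁, x₂]`.
  set z₀ : Pt := ![-(m * v : ℝ), m * u]
  have hz₀ : det2 d z₀ = m := by
    simp only [det2, d, z₀, Matrix.cons_val_zero, Matrix.cons_val_one, Matrix.cons_val_fin_one,
      mul_neg, sub_neg_eq_add]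
    linear_combination (m : ℝ) * huvR
  have hD : 0 < det2 d (x₂ - x₁) := by rw [det2_sub_right]; linarith
  obtain ⟨t, ht⟩ := exists_int_gt (-det2 (z₀ - x₁) (x₂ - x₁) / det2 d (x₂ - x₁))
  rw [div_lt_iff₀ hD] at ht
  have hz : det2 d (z₀ + (t : ℝ) • d) = m := by
    rw [← hz₀]; simp only [det2, Pi.add_apply, Pi.smul_apply, smul_eq_mul]; ring
  have hzv : det2 (z₀ + (t : ℝ) • d - x₁) (x₂ - x₁) =
      det2 (z₀ - x₁) (x₂ - x₁) + t * det2 d (x₂ - x₁) := by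
    simp only [det2, Pi.add_apply, Pi.sub_apply, Pi.smul_apply, smul_eq_mul]; ring
  refine ⟨z₀ + (t : ℝ) • d, mem_interior_of_mem_halfStrip hC hray hx₁ hx₂ ?_ ?_ ?_, ?_⟩
  · rw [det2_sub_right, hz]; linarith
  · rw [det2_sub_right, det2_sub_right, hz]; linarith
  · rw [hzv]; linarith
  · intro j
    fin_cases j
    · exact ⟨-(m * v) + t * a, by simp [z₀, d]⟩
    · exact ⟨m * u + t * b, by simp [z₀, d]⟩

lemma exists_int_subset_Icc_of_forall_notMem_Ioo {S : Set ℝ} (hS : S.Nonempty)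
    (h : ∀ x ∈ S, ∀ y ∈ S, ∀ n : ℤ, (n : ℝ) ∉ Ioo x y) :
    ∃ n : ℤ, S ⊆ Icc (n : ℝ) (n + 1) := by
  obtain ⟨c, hc⟩ := hS
  by_cases hlow : ∃ y ∈ S, y < ⌊c⌋
  · obtain ⟨y, hy, hyc⟩ := hlow
    have hcm : c = ⌊c⌋ :=
      le_antisymm (not_lt.1 fun hlt => h y hy c hc _ ⟨hyc, hlt⟩) (Int.floor_le c)
    refine ⟨⌊c⌋ - 1, fun x hx => ⟨?_, ?_⟩⟩
    · by_contra! hlt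
      push_cast at hlt
      exact h x hx c hc (⌊c⌋ - 1) ⟨by push_cast; linarith, by push_cast; linarith⟩
    · by_contra! hlt
      exact h y hy x hx ⌊c⌋ ⟨hyc, by push_cast at hlt; linarith⟩
  · push Not at hlow
    refine ⟨⌊c⌋, fun x hx => ⟨hlow x hx, ?_⟩⟩
    by_contra! hlt
    exact h c hc x hx (⌊c⌋ + 1)
      ⟨by push_cast; exact Int.lt_floor_add_one c, by push_cast; exact hlt⟩

lemma exists_isSplitSet_superset {C : Set Pt} (hC : Convex ℝ C) (hne : C.Nonempty)
    (hfree : LatticeFree C) {a b : ℤ} (hab : IsCoprime a b)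
    (hray : ∀ x ∈ C, ∀ t : ℝ, 0 ≤ t → x + t • ![(a : ℝ), b] ∈ C) :
    ∃ T, IsSplitSet T ∧ C ⊆ T := by
  obtain ⟨n, hn⟩ :=
      exists_int_subset_Icc_of_forall_notMem_Ioo (hne.image (det2 ![(a : ℝ), b])) <| by
    rintro _ ⟨x₁, hx₁, rfl⟩ _ ⟨x₂, hx₂, rfl⟩ m ⟨h₁, h₂⟩
    obtain ⟨z, hz, hzint⟩ := exists_isIntPt_mem_interior hC hab hray hx₁ hx₂ h₁ h₂
    exact hfree z hz hzint
  refine ⟨_, ⟨![-b, a], n, ?_, rfl⟩, fun x hx => ?_⟩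
  · intro h
    have h₀ := congrFun h 0
    have h₁ := congrFun h 1
    simp only [Matrix.cons_val_zero, Matrix.cons_val_one, Pi.zero_apply, neg_eq_zero] at h₀ h₁
    exact not_isCoprime_zero_zero (h₁ ▸ h₀ ▸ hab)
  · have : ∑ j, ((![-b, a] j : ℤ) : ℝ) * x j = det2 ![(a : ℝ), b] x := by
      simp only [det2, Fin.sum_univ_two, Matrix.cons_val_zero, Matrix.cons_val_one,
        Matrix.cons_val_fin_one, Int.cast_neg, neg_mul]
      ring
    rw [mem_ofPred_eq, this]
    exact hn ⟨x, hx, rfl⟩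

lemma IsRatPt.exists_nat_isIntPt_smul {x : Pt} (hx : IsRatPt x) :
    ∃ N : ℕ, 0 < N ∧ IsIntPt ((N : ℝ) • x) := by
  obtain ⟨q₀, hq₀⟩ := hx 0
  obtain ⟨q₁, hq₁⟩ := hx 1
  refine ⟨q₀.den * q₁.den, by positivity, fun j => ?_⟩
  fin_cases j
  · refine ⟨q₀.num * q₁.den, ?_⟩
    have : (q₀ : ℝ) * q₀.den = q₀.num := by exact_mod_cast q₀.mul_den_eq_num
    simp only [Pi.smul_apply, smul_eq_mul]
    push_cast
    linear_combination (q₁.den : ℝ) * this + (q₀.den * q₁.den : ℝ) * hq₀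
  · refine ⟨q₁.num * q₀.den, ?_⟩
    have : (q₁ : ℝ) * q₁.den = q₁.num := by exact_mod_cast q₁.mul_den_eq_num
    simp only [Pi.smul_apply, smul_eq_mul]
    push_cast
    linear_combination (q₀.den : ℝ) * this + (q₀.den * q₁.den : ℝ) * hq₁

lemma IsIntPt.exists_eq_smul_coprime {y : Pt} (hy : IsIntPt y) (hy0 : y ≠ 0) :
    ∃ g : ℕ, 0 < g ∧ ∃ a b : ℤ, IsCoprime a b ∧ y = (g : ℝ) • ![(a : ℝ), b] := by
  obtain ⟨p₀, hp₀⟩ := hy 0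
  obtain ⟨p₁, hp₁⟩ := hy 1
  have hp : 0 < Int.gcd p₀ p₁ := by
    refine Int.gcd_pos_iff.2 (by_contra fun h => hy0 ?_)
    push Not at h
    funext j; fin_cases j <;> simp [hp₀, hp₁, h]
  obtain ⟨g, a, b, hg, hab, rfl, rfl⟩ := Int.exists_gcd_one' hp
  refine ⟨g, hg, a, b, Int.isCoprime_iff_gcd_eq_one.2 hab, ?_⟩
  funext j; fin_cases j <;> simp [hp₀, hp₁, mul_comm]

lemma IsRatPt.exists_eq_smul_coprime {x : Pt} (hx : IsRatPt x) (hx0 : x ≠ 0) :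
    ∃ μ : ℝ, 0 < μ ∧ ∃ a b : ℤ, IsCoprime a b ∧ x = μ • ![(a : ℝ), b] := by
  obtain ⟨N, hN, hNx⟩ := hx.exists_nat_isIntPt_smul
  obtain ⟨g, hg, a, b, hab, hgab⟩ :=
    hNx.exists_eq_smul_coprime (smul_ne_zero (by positivity) hx0)
  refine ⟨g / N, by positivity, a, b, hab, ?_⟩
  rw [div_eq_inv_mul, mul_smul, ← hgab, inv_smul_smul₀ (by positivity)]

section InducedSet

variable {k : ℕ} {r : Fin k → Pt} {f : Pt} {α : Fin k → ℝ}

lemma f_mem_inducedSet : f ∈ inducedSet k r f α := by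
  rw [inducedSet, coneGen_eq_hull]
  exact ⟨f, subset_convexHull ℝ _ (Or.inl rfl), 0, zero_mem _, add_zero f⟩

lemma convex_inducedSet : Convex ℝ (inducedSet k r f α) := by
  rw [inducedSet, coneGen_eq_hull]
  exact (convex_convexHull ℝ _).add (PointedCone.convex _)

lemma add_smul_mem_inducedSet {i : Fin k} (hi : α i = 0) {x : Pt}
    (hx : x ∈ inducedSet k r f α) {t : ℝ} (ht : 0 ≤ t) :
    x + t • r i ∈ inducedSet k r f α := by
  rw [inducedSet, coneGen_eq_hull] at hx ⊢
  obtain ⟨a, ha, y, hy, rfl⟩ := hx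
  rw [add_assoc, ← Nonneg.mk_smul t ht]
  exact add_mem_add ha
    (add_mem hy (Submodule.smul_mem _ _ (PointedCone.subset_hull ⟨i, hi, rfl⟩)))

lemma exists_nonneg_of_mem_inducedSet {x : Pt} (hx : x ∈ inducedSet k r f α) :
    ∃ s : Fin k → ℝ, 0 ≤ s ∧ ∑ i, α i * s i ≤ 1 ∧ x = f + ∑ i, s i • r i := by
  classical
  let T := Fintype.linearCombination ℝ r
  let ℓ := dotProductEquiv ℝ (Fin k) α
  have hK : Convex ℝ {s : Fin k → ℝ | 0 ≤ s ∧ ℓ s ≤ 1} :=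
    (convex_Ici 0).inter (convex_halfSpace_le ℓ.isLinear 1)
  have hhull : convexHull ℝ ({f} ∪ {x | ∃ i, 0 < α i ∧ x = f + (α i)⁻¹ • r i}) ⊆
      (fun s => f + T s) '' {s | 0 ≤ s ∧ ℓ s ≤ 1} := by
    refine convexHull_min ?_ (by simpa only [Set.image_image] using (hK.linear_image T).translate f)
    · rintro _ (rfl | ⟨i, hi, rfl⟩)
      · exact ⟨0, ⟨le_rfl, by simp⟩, by simp⟩
      · refine ⟨Pi.single i (α i)⁻¹, ⟨Pi.single_nonneg.2 (inv_nonneg.2 hi.le), ?_⟩, by simp [T]⟩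
        simp [ℓ, dotProduct_single, mul_inv_cancel₀ hi.ne']
  let K₀ : PointedCone ℝ (Fin k → ℝ) :=
    PointedCone.positive ℝ (Fin k → ℝ) ⊓ (LinearMap.ker ℓ).restrictScalars _
  have hcone : PointedCone.hull ℝ {x | ∃ i, α i = 0 ∧ x = r i} ≤ K₀.map T := by
    refine Submodule.span_le.2 ?_
    rintro _ ⟨i, hi, rfl⟩
    refine ⟨Pi.single i 1, ⟨Pi.single_nonneg.2 zero_le_one, ?_⟩, by simp [T]⟩
    simp [ℓ, dotProduct_single, hi]
  rw [inducedSet, coneGen_eq_hull] at hx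
  obtain ⟨_, ha, _, hy, rfl⟩ := hx
  obtain ⟨s₁, ⟨hs₁, hℓs₁⟩, rfl⟩ := hhull ha
  obtain ⟨s₂, ⟨hs₂, hℓs₂⟩, rfl⟩ := hcone hy
  refine ⟨s₁ + s₂, add_nonneg hs₁ hs₂, ?_, ?_⟩
  · change ℓ (s₁ + s₂) ≤ 1
    rwa [map_add, LinearMap.mem_ker.1 hℓs₂, add_zero]
  · simp [T, Fintype.linearCombination_apply, add_smul, Finset.sum_add_distrib, add_assoc]

open Filter Topology in
lemma latticeFree_inducedSet (hvalid : ValidIneq k r f α 1) :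
    LatticeFree (inducedSet k r f α) := by
  intro x hx hint
  have hpush : Tendsto (fun δ : ℝ => x + δ • (x - f)) (𝓝[>] 0) (𝓝 x) := by
    have hcont : Continuous fun δ : ℝ => x + δ • (x - f) := by fun_prop
    simpa using (hcont.tendsto 0).mono_left nhdsWithin_le_nhds
  obtain ⟨δ, hδL, hδ⟩ :=
    ((hpush.eventually (mem_interior_iff_mem_nhds.1 hx)).and self_mem_nhdsWithin).exists
  obtain ⟨s, hs, hαs, hxs⟩ := exists_nonneg_of_mem_inducedSet hδL
  set c : ℝ := (1 + δ)⁻¹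
  have hc : c < 1 := inv_lt_one_of_one_lt₀ (by simpa using hδ)
  have hc₀ : 0 ≤ c := by positivity
  have hxc : x = f + ∑ i, (c • s) i • r i := by
    have : x - f = c • ∑ i, s i • r i := by
      rw [eq_inv_smul_iff₀ (by positivity)]
      linear_combination (norm := module) hxs
    simp only [Pi.smul_apply, smul_eq_mul, ← smul_smul, ← Finset.smul_sum, ← this]
    abel
  have hval := hvalid (x, c • s) ⟨hint, fun i => mul_nonneg hc₀ (hs i), hxc⟩
  have : ∑ i, α i * (c • s) i = c * ∑ i, α i * s i := by
    simp only [Pi.smul_apply, smul_eq_mul, Finset.mul_sum]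
    exact Finset.sum_congr rfl fun i _ => by ring
  nlinarith

lemma isBounded_inducedSet (hα : ∀ i, 0 < α i) : Bornology.IsBounded (inducedSet k r f α) := by
  have : {x | ∃ i, α i = 0 ∧ x = r i} = ∅ :=
    eq_empty_of_forall_notMem (by rintro _ ⟨i, hi, -⟩; exact (hα i).ne' hi)
  simp only [inducedSet, coneGen_eq_hull, this, PointedCone.hull, Submodule.span_empty,
    Submodule.bot_coe, Set.add_singleton, add_zero, Set.image_id']
  refine isBounded_convexHull.2 ((Set.finite_singleton f).union ?_).isBounded
  exact (Set.finite_range fun i => f + (α i)⁻¹ • r i).subset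
    (by rintro _ ⟨i, -, rfl⟩; exact ⟨i, rfl⟩)

end InducedSet

theorem notInSplit_bounded_posCoeffs_general (k : ℕ)
    (r : Fin k → Pt) (f : Pt)
    (hr_rat : ∀ i, IsRatPt (r i)) (hr_ne : ∀ i, r i ≠ 0)
    (α : Fin k → ℝ) (hα : ∀ i, 0 ≤ α i)
    (hvalid : ValidIneq k r f α 1)
    (hnotsplit : ¬ ∃ T : Set Pt, IsSplitSet T ∧ inducedSet k r f α ⊆ T) :
    Bornology.IsBounded (inducedSet k r f α) ∧ ∀ i, 0 < α i := by
  have hpos : ∀ i, 0 < α i := by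
    intro i
    refine (hα i).lt_of_ne' fun hαi => hnotsplit ?_
    obtain ⟨μ, hμ, a, b, hab, hr⟩ := (hr_rat i).exists_eq_smul_coprime (hr_ne i)
    refine exists_isSplitSet_superset convex_inducedSet ⟨f, f_mem_inducedSet⟩
      (latticeFree_inducedSet hvalid) hab fun x hx t ht => ?_
    have := add_smul_mem_inducedSet hαi hx (div_nonneg ht hμ.le)
    rwa [hr, smul_smul, div_mul_cancel₀ _ hμ.ne'] at this
  exact ⟨isBounded_inducedSet hpos, hpos⟩

theorem notInSplit_bounded_posCoeffs (k : ℕ)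
    (hk : 1 ≤ k)
    (r : Fin k → Pt) (f : Pt)
    (hr_rat : ∀ i, IsRatPt (r i)) (hr_ne : ∀ i, r i ≠ 0)
    (hf_rat : IsRatPt f) (hf_int : ¬ IsIntPt f)
    (hne : (mixedP k r f).Nonempty)
    (α : Fin k → ℝ) (hα : ∀ i, 0 ≤ α i)
    (hvalid : ValidIneq k r f α 1)
    (hnotsplit : ¬ ∃ T : Set Pt, IsSplitSet T ∧ inducedSet k r f α ⊆ T) :
    Bornology.IsBounded (inducedSet k r f α) ∧ ∀ i, 0 < α i :=
  notInSplit_bounded_posCoeffs_general k r f hr_rat hr_ne α hα hvalid hnotsplit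
end

section
/- (Projection.) Let r^{k+1} ∈ ℚ² ∖ {0} and let ∑_{i=1}^{k+1} αᵢ sᵢ ≥ γ with α ∈ ℝ^{k+1}, α ≥ 0, be a valid inequality for conv(P([R r^{k+1}],f)) of split rank η with respect to P([R r^{k+1}],f)⁰. Then ∑_{i=1}^{k} αᵢ sᵢ ≥ γ is a valid inequality for conv(P(R,f)) and has split rank at most η with respect to P(R,f)⁰. -/
open Set Pointwise

/-!
Appending the coordinate `s_{k+1} = 0` embeds `P(R,f)⁰` into `P([R r^{k+1}],f)⁰` by a linear map
that fixes `x`, sends `P(R,f)` into `P([R r^{k+1}],f)` and turns `∑_{i ≤ k+1} αᵢ sᵢ` into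
`∑_{i ≤ k} αᵢ sᵢ`. Since split disjunctions only involve `x`, such a map sends every split closure
of the small relaxation into the corresponding closure of the large one, so any inequality valid
on the `j`-th closure of the large relaxation restricts to one valid on the `j`-th closure of the
small one.
-/

section MapsTo

variable {k m : ℕ} (L : (Pt × (Fin k → ℝ)) →ₗ[ℝ] (Pt × (Fin m → ℝ)))

theorem mapsTo_splitClosure (hL : ∀ p, (L p).1 = p.1)
    {C : Set (Pt × (Fin k → ℝ))} {D : Set (Pt × (Fin m → ℝ))} (hCD : MapsTo L C D) :
    MapsTo L (splitClosure k C) (splitClosure m D) := by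
  intro p hp
  simp only [splitClosure, mem_iInter] at hp ⊢
  intro π π₀
  have hLp := mem_image_of_mem L (hp π π₀)
  rw [LinearMap.image_convexHull] at hLp
  refine convexHull_mono ?_ hLp
  rintro _ ⟨q, hq | hq, rfl⟩
  · exact Or.inl ⟨hCD hq.1, by simpa only [mem_ofPred_eq, hL] using hq.2⟩
  · exact Or.inr ⟨hCD hq.1, by simpa only [mem_ofPred_eq, hL] using hq.2⟩

theorem mapsTo_closures (hL : ∀ p, (L p).1 = p.1) {r : Fin k → Pt} {r' : Fin m → Pt} {f : Pt}
    (h₀ : MapsTo L (relaxP k r f) (relaxP m r' f)) (n : ℕ) :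
    MapsTo L (closures k r f n) (closures m r' f n) := by
  induction n with
  | zero => exact h₀
  | succ n ih => exact mapsTo_splitClosure L hL ih

theorem splitRank_le_of_mapsTo (hL : ∀ p, (L p).1 = p.1) {r : Fin k → Pt} {r' : Fin m → Pt}
    {f : Pt} (h₀ : MapsTo L (relaxP k r f) (relaxP m r' f)) {α : Fin k → ℝ} {β : Fin m → ℝ}
    (hαβ : ∀ p, ∑ i, β i * (L p).2 i = ∑ i, α i * p.2 i) (γ : ℝ) :
    splitRank k r f α γ ≤ splitRank m r' f β γ := by
  refine sInf_le_sInf ?_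
  rintro _ ⟨n, rfl, hvalid⟩
  exact ⟨n, rfl, fun p hp => hαβ p ▸ hvalid _ (mapsTo_closures L hL h₀ n hp)⟩

end MapsTo

theorem ValidIneq.of_mapsTo {k m : ℕ} {r : Fin k → Pt} {r' : Fin m → Pt} {f : Pt}
    {L : Pt × (Fin k → ℝ) → Pt × (Fin m → ℝ)} (hL : MapsTo L (mixedP k r f) (mixedP m r' f))
    {α : Fin k → ℝ} {β : Fin m → ℝ} (hαβ : ∀ p, ∑ i, β i * (L p).2 i = ∑ i, α i * p.2 i)
    {γ : ℝ} (hβ : ValidIneq m r' f β γ) : ValidIneq k r f α γ :=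
  fun p hp => hαβ p ▸ hβ _ (hL hp)

def appendZero (k : ℕ) : (Pt × (Fin k → ℝ)) →ₗ[ℝ] (Pt × (Fin (k + 1) → ℝ)) where
  toFun p := (p.1, Fin.snoc p.2 0)
  map_add' p q := by
    refine Prod.ext rfl (funext fun i => ?_)
    refine Fin.lastCases ?_ (fun j => ?_) i <;> simp
  map_smul' c p := by
    refine Prod.ext rfl (funext fun i => ?_)
    refine Fin.lastCases ?_ (fun j => ?_) i <;> simp

namespace appendZero

variable {k : ℕ}

@[simp] theorem apply_fst (p : Pt × (Fin k → ℝ)) : (appendZero k p).1 = p.1 := rfl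

@[simp] theorem apply_snd (p : Pt × (Fin k → ℝ)) : (appendZero k p).2 = Fin.snoc p.2 0 := rfl

theorem sum_mul_apply_snd (α : Fin (k + 1) → ℝ) (p : Pt × (Fin k → ℝ)) :
    ∑ i, α i * (appendZero k p).2 i = ∑ i, α i.castSucc * p.2 i := by
  simp [Fin.sum_univ_castSucc]

theorem mapsTo_relaxP (r : Fin k → Pt) (rnew f : Pt) :
    MapsTo (appendZero k) (relaxP k r f) (relaxP (k + 1) (Fin.snoc r rnew) f) := by
  rintro p ⟨hpos, hx⟩
  refine ⟨fun i => ?_, by simpa [Fin.sum_univ_castSucc] using hx⟩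
  refine Fin.lastCases ?_ (fun j => ?_) i
  · simp
  · simpa using hpos j

theorem mapsTo_mixedP (r : Fin k → Pt) (rnew f : Pt) :
    MapsTo (appendZero k) (mixedP k r f) (mixedP (k + 1) (Fin.snoc r rnew) f) :=
  fun _ ⟨hint, hrelax⟩ => ⟨hint, mapsTo_relaxP r rnew f hrelax⟩

end appendZero

theorem projection_general (k : ℕ)
    (r : Fin k → Pt) (f : Pt)
    (rnew : Pt)
    (α : Fin (k + 1) → ℝ) (γ : ℝ)
    (hvalid : ValidIneq (k + 1) (Fin.snoc r rnew) f α γ)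
    (η : ℕ∞) (hη : splitRank (k + 1) (Fin.snoc r rnew) f α γ = η) :
    ValidIneq k r f (fun i => α i.castSucc) γ ∧
    splitRank k r f (fun i => α i.castSucc) γ ≤ η :=
  ⟨hvalid.of_mapsTo (appendZero.mapsTo_mixedP r rnew f) (appendZero.sum_mul_apply_snd α),
    hη ▸ splitRank_le_of_mapsTo (appendZero k) appendZero.apply_fst
      (appendZero.mapsTo_relaxP r rnew f) (appendZero.sum_mul_apply_snd α) γ⟩

theorem projection (k : ℕ)
    (hk : 1 ≤ k)
    (r : Fin k → Pt) (f : Pt)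
    (hr_rat : ∀ i, IsRatPt (r i)) (hr_ne : ∀ i, r i ≠ 0)
    (hf_rat : IsRatPt f) (hf_int : ¬ IsIntPt f)
    (hne : (mixedP k r f).Nonempty)
    (rnew : Pt) (hrnew_rat : IsRatPt rnew) (hrnew_ne : rnew ≠ 0)
    (α : Fin (k + 1) → ℝ) (hα : ∀ i, 0 ≤ α i) (γ : ℝ)
    (hvalid : ValidIneq (k + 1) (Fin.snoc r rnew) f α γ)
    (η : ℕ∞) (hη : splitRank (k + 1) (Fin.snoc r rnew) f α γ = η) :
    ValidIneq k r f (fun i => α i.castSucc) γ ∧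
    splitRank k r f (fun i => α i.castSucc) γ ≤ η :=
  projection_general k r f rnew α γ hvalid η hη
end

section
/- (Simple Lifting.) Let ∑_{i=1}^k αᵢ sᵢ ≥ 1 with α ∈ ℝ^k, α ≥ 0, be a valid inequality for conv(P(R,f)) of split rank η with respect to P(R,f)⁰. Let r^{k+1} ∈ ℚ² ∖ {0} lie in the cone generated by {r¹,…,r^k}, and let α_{k+1} > 0 be such that f + r^{k+1}/α_{k+1} lies on the topological boundary of L_α. Then ∑_{i=1}^k αᵢ sᵢ + α_{k+1} s_{k+1} ≥ 1 is a valid inequality for conv(P([R r^{k+1}],f)) of split rank at most η with respect to P([R r^{k+1}],f)⁰. -/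
/-!
The point `f + r^{k+1}/α_{k+1}` lies in the closure of `L_α`, hence in the polyhedron
`f + {∑ λᵢ rⁱ : λ ≥ 0, ∑ αᵢ λᵢ ≤ 1}`, which contains `L_α` and is closed because finitely
generated cones are closed (conic Carathéodory reduces them to finitely many simplicial cones).
So `r^{k+1} = ∑ λᵢ rⁱ` with `λ ≥ 0` and `∑ αᵢ λᵢ ≤ α_{k+1}`. The linear map
`(x, s) ↦ (x, (sᵢ + λᵢ s_{k+1})ᵢ)` sends `P([R r^{k+1}], f)⁰` into `P(R, f)⁰` and fixes `x`, so it
maps every split closure of the new relaxation into the corresponding split closure of the old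
one. Pulling `∑ αᵢ sᵢ ≥ 1` back along it gives `∑ αᵢ sᵢ + (∑ αᵢ λᵢ) s_{k+1} ≥ 1`, and
`∑ αᵢ λᵢ ≤ α_{k+1}`, `s_{k+1} ≥ 0` finish the argument.
-/

open Set Pointwise

section FinCone

variable {ι E : Type*} [AddCommGroup E] [Module ℝ E]

def finCone (w : ι → E) (s : Finset ι) : Set E :=
  {x | ∃ c : ι → ℝ, (∀ j ∈ s, 0 ≤ c j) ∧ ∑ j ∈ s, c j • w j = x}

lemma exists_min_ratio (s : Finset ι) {c h : ι → ℝ} (hc : ∀ j ∈ s, 0 ≤ c j)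
    (hpos : ∃ j ∈ s, 0 < h j) :
    ∃ j₀ ∈ s, 0 < h j₀ ∧ ∀ j ∈ s, c j₀ / h j₀ * h j ≤ c j := by
  classical
  obtain ⟨j₀, hj₀, hmin⟩ := (s.filter (0 < h ·)).exists_min_image (fun j => c j / h j)
    (by simpa [Finset.Nonempty] using hpos)
  rw [Finset.mem_filter] at hj₀
  refine ⟨j₀, hj₀.1, hj₀.2, fun j hj => ?_⟩
  rcases le_or_gt (h j) 0 with hj0 | hj0
  · exact (mul_nonpos_of_nonneg_of_nonpos (div_nonneg (hc _ hj₀.1) hj₀.2.le) hj0).trans (hc j hj)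
  · exact (le_div_iff₀ hj0).mp (hmin j (Finset.mem_filter.mpr ⟨hj, hj0⟩))

lemma exists_pos_relation_of_not_linearIndepOn {w : ι → E} {s : Finset ι}
    (hs : ¬ LinearIndepOn ℝ w s) :
    ∃ h : ι → ℝ, ∑ j ∈ s, h j • w j = 0 ∧ ∃ j ∈ s, 0 < h j := by
  obtain ⟨g, hg, i, hi, hgi⟩ := not_linearIndepOn_finset_iff.mp hs
  rcases hgi.lt_or_gt with hneg | hpos
  · exact ⟨-g, by simp [hg], i, hi, by simpa using hneg⟩
  · exact ⟨g, hg, i, hi, hpos⟩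

lemma finCone_subset_iUnion_erase [DecidableEq ι] {w : ι → E} {s : Finset ι}
    (hs : ¬ LinearIndepOn ℝ w s) : finCone w s ⊆ ⋃ j ∈ s, finCone w (s.erase j) := by
  rintro _ ⟨c, hc, rfl⟩
  obtain ⟨h, hh, hpos⟩ := exists_pos_relation_of_not_linearIndepOn hs
  obtain ⟨j₀, hj₀, hh₀, hmin⟩ := exists_min_ratio s hc hpos
  set τ := c j₀ / h j₀
  have hτ : c j₀ - τ * h j₀ = 0 := by simp [τ, div_mul_cancel₀ _ hh₀.ne']
  refine mem_iUnion₂.mpr ⟨j₀, hj₀, fun j => c j - τ * h j,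
    fun j hj => sub_nonneg.mpr (hmin j (Finset.mem_of_mem_erase hj)), ?_⟩
  rw [Finset.sum_erase s (by simp [hτ])]
  simp only [sub_smul, Finset.sum_sub_distrib, mul_smul, ← Finset.smul_sum, hh, smul_zero,
    sub_zero]

lemma finCone_mono {w : ι → E} {s t : Finset ι} (hts : t ⊆ s) : finCone w t ⊆ finCone w s := by
  classical
  rintro _ ⟨c, hc, rfl⟩
  refine ⟨(t : Set ι).indicator c, fun j _ => ?_, ?_⟩
  · by_cases hj : j ∈ t <;> simp [hj, hc]
  · rw [← Finset.sum_indicator_subset (fun j => c j • w j) hts]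
    refine Finset.sum_congr rfl fun j _ => ?_
    by_cases hj : j ∈ t <;> simp [hj]

lemma exists_linearIndepOn_of_mem_finCone {w : ι → E} {s : Finset ι} {x : E}
    (hx : x ∈ finCone w s) : ∃ t ⊆ s, LinearIndepOn ℝ w t ∧ x ∈ finCone w t := by
  classical
  induction s using Finset.strongInduction with
  | _ s ih =>
    by_cases hs : LinearIndepOn ℝ w s
    · exact ⟨s, subset_rfl, hs, hx⟩
    obtain ⟨j, hj, hxj⟩ := mem_iUnion₂.mp (finCone_subset_iUnion_erase hs hx)
    obtain ⟨t, hts, ht, hxt⟩ := ih _ (Finset.erase_ssubset hj) hxj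
    exact ⟨t, hts.trans (Finset.erase_subset _ _), ht, hxt⟩

variable [TopologicalSpace E] [IsTopologicalAddGroup E] [ContinuousSMul ℝ E] [T2Space E]

lemma isClosed_finCone_of_linearIndepOn {w : ι → E} {t : Finset ι} (ht : LinearIndepOn ℝ w t) :
    IsClosed (finCone w t) := by
  classical
  have himage : finCone w t = Fintype.linearCombination ℝ (fun j : t => w j) '' Ici 0 := by
    ext x
    simp only [finCone, mem_ofPred_eq, mem_image, mem_Ici, Fintype.linearCombination_apply]
    constructor
    · rintro ⟨c, hc, rfl⟩
      exact ⟨fun j => c j, fun j => hc j j.2, Finset.sum_coe_sort t (fun j => c j • w j)⟩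
    · rintro ⟨d, hd, rfl⟩
      refine ⟨fun j => if hj : j ∈ t then d ⟨j, hj⟩ else 0,
        fun j hj => by simpa [hj] using hd ⟨j, hj⟩, ?_⟩
      rw [← Finset.sum_coe_sort t]
      simp
  rw [himage]
  refine (LinearMap.isClosedEmbedding_of_injective ?_).isClosedMap _ isClosed_Ici
  exact LinearMap.ker_eq_bot.mpr ht.fintypeLinearCombination_injective

lemma isClosed_finCone (w : ι → E) (s : Finset ι) : IsClosed (finCone w s) := by
  have hunion : finCone w s =
      ⋃ t ∈ s.powerset, ⋃ (_ : LinearIndepOn ℝ w t), finCone w t := by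
    refine Subset.antisymm (fun x hx => ?_) (iUnion₂_subset fun t ht => iUnion_subset fun _ => ?_)
    · obtain ⟨t, hts, ht, hxt⟩ := exists_linearIndepOn_of_mem_finCone hx
      exact mem_iUnion₂.mpr ⟨t, Finset.mem_powerset.mpr hts, mem_iUnion.mpr ⟨ht, hxt⟩⟩
    · exact finCone_mono (Finset.mem_powerset.mp ht)
  rw [hunion]
  exact isClosed_biUnion_finset fun t _ =>
    isClosed_iUnion_of_finite isClosed_finCone_of_linearIndepOn

end FinCone

section CappedCone

variable {ι E : Type*} [Fintype ι] [AddCommGroup E] [Module ℝ E]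

def cappedCone (w : ι → E) (a : ι → ℝ) : Set E :=
  {x | ∃ c : ι → ℝ, (∀ j, 0 ≤ c j) ∧ ∑ j, a j * c j ≤ 1 ∧ ∑ j, c j • w j = x}

lemma cappedCone_eq_preimage_finCone (w : ι → E) (a : ι → ℝ) :
    cappedCone w a = (fun x => (x, (1 : ℝ))) ⁻¹'
      finCone (fun o : Option ι => o.elim ((0 : E), (1 : ℝ)) fun j => (w j, a j)) Finset.univ := by
  ext x
  simp only [cappedCone, finCone, mem_preimage, mem_ofPred_eq, Finset.mem_univ, forall_const,
    Fintype.sum_option, Option.elim, Prod.smul_mk, smul_zero, smul_eq_mul, mul_one,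
    Prod.fst_sum, Prod.snd_sum, Prod.ext_iff, Prod.fst_add, Prod.snd_add, zero_add]
  constructor
  · rintro ⟨c, hc, hca, rfl⟩
    refine ⟨fun o => o.elim (1 - ∑ j, a j * c j) c, fun o => ?_, rfl, ?_⟩
    · cases o <;> simp [hc, hca]
    · simp only [Option.elim, mul_comm (c _)]
      ring
  · rintro ⟨c, hc, hx, h1⟩
    refine ⟨fun j => c (some j), fun j => hc _, ?_, hx⟩
    have := hc none
    simp only [mul_comm (a _)]
    linarith

lemma convex_cappedCone (w : ι → E) (a : ι → ℝ) : Convex ℝ (cappedCone w a) := by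
  rintro _ ⟨c, hc, hca, rfl⟩ _ ⟨d, hd, hda, rfl⟩ μ ν hμ hν hμν
  refine ⟨μ • c + ν • d, fun j => ?_, ?_, ?_⟩
  · have := hc j; have := hd j
    simp only [Pi.add_apply, Pi.smul_apply, smul_eq_mul]
    positivity
  · simp only [Pi.add_apply, Pi.smul_apply, smul_eq_mul, mul_add, Finset.sum_add_distrib,
      mul_left_comm (a _), ← Finset.mul_sum]
    nlinarith
  · simp only [Pi.add_apply, Pi.smul_apply, add_smul, smul_assoc, Finset.sum_add_distrib,
      ← Finset.smul_sum]

lemma zero_mem_cappedCone (w : ι → E) (a : ι → ℝ) : (0 : E) ∈ cappedCone w a :=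
  ⟨0, fun _ => le_rfl, by simp, by simp⟩

lemma inv_smul_mem_cappedCone [DecidableEq ι] {w : ι → E} {a : ι → ℝ} {i : ι} (hi : 0 < a i) :
    (a i)⁻¹ • w i ∈ cappedCone w a := by
  refine ⟨Pi.single i (a i)⁻¹, fun j => ?_, by simp [Pi.single_apply, hi.ne'], by simp⟩
  by_cases h : j = i <;> simp [h, hi.le]

lemma add_smul_mem_cappedCone [DecidableEq ι] {w : ι → E} {a : ι → ℝ} {x : E}
    (hx : x ∈ cappedCone w a) {i : ι} (hi : a i = 0) {t : ℝ} (ht : 0 ≤ t) :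
    x + t • w i ∈ cappedCone w a := by
  obtain ⟨c, hc, hca, rfl⟩ := hx
  refine ⟨c + Pi.single i t, fun j => ?_, ?_, ?_⟩
  · by_cases h : j = i <;> simp [h, hc, ht, add_nonneg]
  · simpa [mul_add, Finset.sum_add_distrib, Pi.single_apply, hi] using hca
  · simp [add_smul, Finset.sum_add_distrib]

lemma isClosed_cappedCone [TopologicalSpace E] [IsTopologicalAddGroup E] [ContinuousSMul ℝ E]
    [T2Space E] (w : ι → E) (a : ι → ℝ) : IsClosed (cappedCone w a) := by
  rw [cappedCone_eq_preimage_finCone]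
  exact (isClosed_finCone _ _).preimage (continuous_id.prodMk continuous_const)

end CappedCone

lemma coneGen_subset_of_smul_mem {S : Set Pt} (M : AddSubmonoid Pt)
    (hM : ∀ v ∈ S, ∀ t : ℝ, 0 ≤ t → t • v ∈ M) : coneGen S ⊆ M := by
  rintro _ ⟨n, c, v, hc, hv, rfl⟩
  exact M.sum_mem fun j _ => hM _ (hv j) _ (hc j)

lemma inducedSet_subset_cappedCone (k : ℕ) (r : Fin k → Pt) (f : Pt) (α : Fin k → ℝ) :
    inducedSet k r f α ⊆ (· - f) ⁻¹' cappedCone r α := by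
  rintro _ ⟨x, hx, y, hy, rfl⟩
  have hxD : x - f ∈ cappedCone r α := by
    have hconv : Convex ℝ ((· - f) ⁻¹' cappedCone r α) := by
      simpa only [sub_eq_add_neg] using (convex_cappedCone r α).translate_preimage_left (-f)
    refine convexHull_min ?_ hconv hx
    rintro _ (rfl | ⟨i, hi, rfl⟩)
    · simpa using zero_mem_cappedCone r α
    · simpa using inv_smul_mem_cappedCone hi
  let recCone : AddSubmonoid Pt :=
    { carrier := {y | ∀ z ∈ cappedCone r α, z + y ∈ cappedCone r α}
      zero_mem' := by simp
      add_mem' := fun ha hb z hz => by rw [← add_assoc]; exact hb _ (ha z hz) }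
  have hy : y ∈ recCone := coneGen_subset_of_smul_mem recCone
    (by rintro _ ⟨i, hi, rfl⟩ t ht z hz; exact add_smul_mem_cappedCone hz hi ht) hy
  simpa [add_sub_right_comm] using hy _ hxD

lemma exists_coeffs_of_mem_frontier_inducedSet {k : ℕ} {r : Fin k → Pt} {f : Pt}
    {α : Fin k → ℝ} {rnew : Pt} {anew : ℝ} (hanew : 0 < anew)
    (hbdry : f + anew⁻¹ • rnew ∈ frontier (inducedSet k r f α)) :
    ∃ lam : Fin k → ℝ, (∀ i, 0 ≤ lam i) ∧ ∑ i, α i * lam i ≤ anew ∧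
      ∑ i, lam i • r i = rnew := by
  have hclosed : IsClosed ((· - f) ⁻¹' cappedCone r α) :=
    (isClosed_cappedCone r α).preimage (continuous_sub_right f)
  obtain ⟨c, hc, hca, hcr⟩ : anew⁻¹ • rnew ∈ cappedCone r α := by
    simpa using closure_minimal (inducedSet_subset_cappedCone k r f α) hclosed
      (frontier_subset_closure hbdry)
  refine ⟨anew • c, fun i => mul_nonneg hanew.le (hc i), ?_, ?_⟩
  · simpa [mul_left_comm (α _), ← Finset.mul_sum] using
      mul_le_mul_of_nonneg_left hca hanew.le
  · simp only [Pi.smul_apply, smul_eq_mul, mul_smul, ← Finset.smul_sum, hcr,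
      smul_inv_smul₀ hanew.ne']

/-- Substitutes `r^{k+1} = ∑ λᵢ rⁱ`, absorbing the last variable into the first `k`. -/
def foldLast (k : ℕ) (lam : Fin k → ℝ) :
    (Pt × (Fin (k + 1) → ℝ)) →ₗ[ℝ] (Pt × (Fin k → ℝ)) :=
  LinearMap.prodMap LinearMap.id
    (LinearMap.pi fun i => LinearMap.proj i.castSucc + lam i • LinearMap.proj (Fin.last k))

@[simp]
lemma foldLast_fst (k : ℕ) (lam : Fin k → ℝ) (p : Pt × (Fin (k + 1) → ℝ)) :
    (foldLast k lam p).1 = p.1 := rfl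

@[simp]
lemma foldLast_snd (k : ℕ) (lam : Fin k → ℝ) (p : Pt × (Fin (k + 1) → ℝ)) (i : Fin k) :
    (foldLast k lam p).2 i = p.2 i.castSucc + lam i * p.2 (Fin.last k) := rfl

lemma mapsTo_splitClosure_s9 {m n : ℕ} (φ : (Pt × (Fin m → ℝ)) →ₗ[ℝ] (Pt × (Fin n → ℝ)))
    (hφ : ∀ p, (φ p).1 = p.1) {C : Set (Pt × (Fin m → ℝ))} {C' : Set (Pt × (Fin n → ℝ))}
    (hC : MapsTo φ C C') : MapsTo φ (splitClosure m C) (splitClosure n C') := by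
  intro p hp
  simp only [splitClosure, mem_iInter] at hp ⊢
  intro π π₀
  refine convexHull_mono ?_ (φ.image_convexHull _ ▸ mem_image_of_mem φ (hp π π₀))
  rintro _ ⟨q, hq | hq, rfl⟩
  · exact Or.inl ⟨hC hq.1, by simpa [hφ] using hq.2⟩
  · exact Or.inr ⟨hC hq.1, by simpa [hφ] using hq.2⟩

lemma splitClosure_subset_of_convex {m : ℕ} {C D : Set (Pt × (Fin m → ℝ))} (hD : Convex ℝ D)
    (hCD : C ⊆ D) : splitClosure m C ⊆ D := fun _ hp =>
  convexHull_min (union_subset (inter_subset_left.trans hCD) (inter_subset_left.trans hCD)) hD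
    (mem_iInter₂.mp hp 0 0)

lemma closures_subset_nonneg (k : ℕ) (r : Fin k → Pt) (f : Pt) (n : ℕ) :
    closures k r f n ⊆ {p | ∀ i, 0 ≤ p.2 i} := by
  induction n with
  | zero => exact fun p hp => hp.1
  | succ n ih =>
    refine splitClosure_subset_of_convex ?_ ih
    exact (convex_Ici 0).linear_preimage (LinearMap.snd ℝ Pt (Fin k → ℝ))

section Lifting

variable {k : ℕ} {r : Fin k → Pt} {f rnew : Pt} {lam : Fin k → ℝ}

lemma snoc_sum_smul (hr : ∑ i, lam i • r i = rnew) (s : Fin (k + 1) → ℝ) :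
    ∑ i, s i • (Fin.snoc r rnew : Fin (k + 1) → Pt) i =
      ∑ i, (s i.castSucc + lam i * s (Fin.last k)) • r i := by
  simp only [Fin.sum_univ_castSucc, Fin.snoc_castSucc, Fin.snoc_last, ← hr, Finset.smul_sum,
    add_smul, mul_comm (lam _), mul_smul, Finset.sum_add_distrib]

lemma foldLast_mem_relaxP (hlam : ∀ i, 0 ≤ lam i) (hr : ∑ i, lam i • r i = rnew)
    {p : Pt × (Fin (k + 1) → ℝ)} (hp : p ∈ relaxP (k + 1) (Fin.snoc r rnew) f) :
    foldLast k lam p ∈ relaxP k r f := by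
  obtain ⟨hp0, hpx⟩ := hp
  refine ⟨fun i => ?_, ?_⟩
  · simpa using add_nonneg (hp0 _) (mul_nonneg (hlam i) (hp0 _))
  · simpa [snoc_sum_smul hr] using hpx

lemma foldLast_mem_mixedP (hlam : ∀ i, 0 ≤ lam i) (hr : ∑ i, lam i • r i = rnew)
    {p : Pt × (Fin (k + 1) → ℝ)} (hp : p ∈ mixedP (k + 1) (Fin.snoc r rnew) f) :
    foldLast k lam p ∈ mixedP k r f :=
  ⟨hp.1, foldLast_mem_relaxP hlam hr hp.2⟩

lemma mapsTo_foldLast_closures (hlam : ∀ i, 0 ≤ lam i) (hr : ∑ i, lam i • r i = rnew) (n : ℕ) :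
    MapsTo (foldLast k lam) (closures (k + 1) (Fin.snoc r rnew) f n) (closures k r f n) := by
  induction n with
  | zero => exact fun p hp => foldLast_mem_relaxP hlam hr hp
  | succ n ih => exact mapsTo_splitClosure_s9 _ (foldLast_fst k lam) ih

lemma one_le_snoc_of_one_le_foldLast {α : Fin k → ℝ} {anew : ℝ} (hlam : ∑ i, α i * lam i ≤ anew)
    {p : Pt × (Fin (k + 1) → ℝ)} (hp : 0 ≤ p.2 (Fin.last k))
    (h : 1 ≤ ∑ i, α i * (foldLast k lam p).2 i) :
    1 ≤ ∑ i, (Fin.snoc α anew : Fin (k + 1) → ℝ) i * p.2 i := by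
  simp only [foldLast_snd, mul_add, Finset.sum_add_distrib, ← mul_assoc, ← Finset.sum_mul] at h
  rw [Fin.sum_univ_castSucc]
  simp only [Fin.snoc_castSucc, Fin.snoc_last]
  nlinarith

end Lifting

theorem simple_lifting_general (k : ℕ)
    (r : Fin k → Pt) (f : Pt)
    (α : Fin k → ℝ)
    (hvalid : ValidIneq k r f α 1)
    (η : ℕ∞) (hη : splitRank k r f α 1 = η)
    (rnew : Pt)
    (anew : ℝ) (hanew : 0 < anew)
    (hbdry : f + anew⁻¹ • rnew ∈ frontier (inducedSet k r f α)) :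
    ValidIneq (k + 1) (Fin.snoc r rnew) f (Fin.snoc α anew) 1 ∧
    splitRank (k + 1) (Fin.snoc r rnew) f (Fin.snoc α anew) 1 ≤ η := by
  obtain ⟨lam, hlam, hαlam, hr⟩ := exists_coeffs_of_mem_frontier_inducedSet hanew hbdry
  refine ⟨fun p hp => one_le_snoc_of_one_le_foldLast hαlam (hp.2.1 _)
    (hvalid _ (foldLast_mem_mixedP hlam hr hp)), ?_⟩
  rw [← hη]
  refine sInf_le_sInf ?_
  rintro _ ⟨n, rfl, hn⟩
  exact ⟨n, rfl, fun p hp => one_le_snoc_of_one_le_foldLast hαlam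
    (closures_subset_nonneg _ _ _ n hp _) (hn _ (mapsTo_foldLast_closures hlam hr n hp))⟩

theorem simple_lifting (k : ℕ)
    (hk : 1 ≤ k)
    (r : Fin k → Pt) (f : Pt)
    (hr_rat : ∀ i, IsRatPt (r i)) (hr_ne : ∀ i, r i ≠ 0)
    (hf_rat : IsRatPt f) (hf_int : ¬ IsIntPt f)
    (hne : (mixedP k r f).Nonempty)
    (α : Fin k → ℝ) (hα : ∀ i, 0 ≤ α i)
    (hvalid : ValidIneq k r f α 1)
    (η : ℕ∞) (hη : splitRank k r f α 1 = η)
    (rnew : Pt) (hrnew_rat : IsRatPt rnew) (hrnew_ne : rnew ≠ 0)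
    (hrnew_cone : rnew ∈ coneGen (Set.range r))
    (anew : ℝ) (hanew : 0 < anew)
    (hbdry : f + anew⁻¹ • rnew ∈ frontier (inducedSet k r f α)) :
    ValidIneq (k + 1) (Fin.snoc r rnew) f (Fin.snoc α anew) 1 ∧
    splitRank (k + 1) (Fin.snoc r rnew) f (Fin.snoc α anew) 1 ≤ η :=
  simple_lifting_general k r f α hvalid η hη rnew anew hanew hbdry
end

section
/- Let k = 3 and suppose the cone generated by {r¹, r², r³} equals ℝ². Let α ∈ ℝ³ with α ≥ 0, let β ∈ ℝ³ with βᵢ > 0 for i = 1,2,3, and set L_β := conv{f + r¹/β₁, f + r²/β₂, f + r³/β₃}. Fix π ∈ ℤ² ∖ {0} and π₀ ∈ ℤ, and define Q := {(x,s) ∈ ℝ² × ℝ³ : s ≥ 0, x = f + Rs, α₁s₁ + α₂s₂ + α₃s₃ ≥ 1}, Q^≤ := Q ∩ {(x,s) : π·x ≤ π₀}, and Q^≥ := Q ∩ {(x,s) : π·x ≥ π₀ + 1}. If every extreme point (x̄, s̄) of Q^≤ and every extreme point (x̄, s̄) of Q^≥ satisfies x̄ ∉ int(L_β), then β₁s₁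 + β₂s₂ + β₃s₃ ≥ 1 holds at every point of conv(Q^≤ ∪ Q^≥). -/
open Set Pointwise

/-!
Suppose `β ⬝ᵥ s < 1` at some point of `Q^≤` (the case of `Q^≥` is the same). Since `β > 0`, the
sublevel sets of `β ⬝ᵥ s` on the relaxation are compact, so this linear functional attains its
minimum over the closed set `Q^≤`; the minimizers form an exposed face, which by Krein–Milman
contains an extreme point `(x̄, s̄)` of `Q^≤` with `β ⬝ᵥ s̄ < 1`. As the rays positively span the
plane, `s ↦ ∑ sᵢ rᵢ` is surjective, hence open, and has a kernel vector `ν > 0`. Every `s > 0` with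
`β ⬝ᵥ s < 1` can be pushed along `ν` to `β ⬝ᵥ s = 1`, so `f + ∑ sᵢ rᵢ ∈ L_β`; the image of this open
set of `s` is therefore an open subset of `L_β`, and it contains `x̄ = f + ∑ (s̄ + tν)ᵢ rᵢ` for small
`t > 0`. This contradicts the hypothesis on extreme points. Finally, the half-space `β ⬝ᵥ s ≥ 1` is
convex, so validity on `Q^≤ ∪ Q^≥` passes to its convex hull.
-/

section Cone

variable {ι : Type*} [Fintype ι] {r : ι → Pt}

lemma exists_nonneg_linearCombination_eq_of_mem_coneGen {x : Pt} (hx : x ∈ coneGen (range r)) :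
    ∃ b : ι → ℝ, (∀ i, 0 ≤ b i) ∧ Fintype.linearCombination ℝ r b = x := by
  classical
  obtain ⟨n, c, v, hc, hv, rfl⟩ := hx
  choose idx hidx using hv
  refine ⟨fun i => ∑ j with idx j = i, c j, fun i => Finset.sum_nonneg fun j _ => hc j, ?_⟩
  rw [Fintype.linearCombination_apply, ← Finset.sum_fiberwise _ idx fun j => c j • v j]
  refine Finset.sum_congr rfl fun i _ => ?_
  rw [Finset.sum_smul]
  refine Finset.sum_congr rfl fun j hj => ?_
  rw [← hidx j, (Finset.mem_filter.1 hj).2]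

lemma surjective_linearCombination_of_coneGen_eq_univ (hr : coneGen (range r) = univ) :
    Function.Surjective (Fintype.linearCombination ℝ r) := fun x =>
  (exists_nonneg_linearCombination_eq_of_mem_coneGen (hr ▸ mem_univ x)).imp fun _ => And.right

lemma exists_pos_linearCombination_eq_zero_of_coneGen_eq_univ (hr : coneGen (range r) = univ) :
    ∃ ν : ι → ℝ, (∀ i, 0 < ν i) ∧ Fintype.linearCombination ℝ r ν = 0 := by
  obtain ⟨b, hb, hbr⟩ := exists_nonneg_linearCombination_eq_of_mem_coneGen
    (hr ▸ mem_univ (-Fintype.linearCombination ℝ r 1))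
  exact ⟨b + 1, fun i => add_pos_of_nonneg_of_pos (hb i) one_pos, by simp [map_add, hbr]⟩

end Cone

section Hull

variable {ι E : Type*} [Fintype ι] [AddCommGroup E] [Module ℝ E] {r : ι → E} {f : E}
  {β ν w : ι → ℝ}

lemma add_linearCombination_mem_convexHull (hβ : ∀ i, 0 < β i) (hw : ∀ i, 0 ≤ w i)
    (hβw : β ⬝ᵥ w = 1) :
    f + Fintype.linearCombination ℝ r w ∈ convexHull ℝ (range fun i => f + (β i)⁻¹ • r i) := by
  have hcomb : ∑ i, (β i * w i) • (f + (β i)⁻¹ • r i) = f + Fintype.linearCombination ℝ r w := by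
    have hβw' : ∑ i, β i * w i = 1 := hβw
    simp only [smul_add, Finset.sum_add_distrib, ← Finset.sum_smul, hβw', one_smul, smul_smul,
      Fintype.linearCombination_apply]
    congr 1
    refine Finset.sum_congr rfl fun i _ => ?_
    rw [mul_right_comm, mul_inv_cancel₀ (hβ i).ne', one_mul]
  rw [← hcomb]
  exact (convex_convexHull ℝ _).sum_mem (fun i _ => mul_nonneg (hβ i).le (hw i)) hβw
    fun i _ => subset_convexHull ℝ _ (mem_range_self i)

lemma add_linearCombination_mem_convexHull_of_le [Nonempty ι] (hβ : ∀ i, 0 < β i)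
    (hν : ∀ i, 0 < ν i) (hrν : Fintype.linearCombination ℝ r ν = 0) (hw : ∀ i, 0 ≤ w i)
    (hβw : β ⬝ᵥ w ≤ 1) :
    f + Fintype.linearCombination ℝ r w ∈ convexHull ℝ (range fun i => f + (β i)⁻¹ • r i) := by
  have hβν : 0 < β ⬝ᵥ ν :=
    Finset.sum_pos (fun i _ => mul_pos (hβ i) (hν i)) Finset.univ_nonempty
  set t := (1 - β ⬝ᵥ w) / β ⬝ᵥ ν
  have ht : 0 ≤ t := div_nonneg (sub_nonneg.2 hβw) hβν.le
  have h := add_linearCombination_mem_convexHull (f := f) (r := r) (w := w + t • ν) hβ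
    (fun i => add_nonneg (hw i) (mul_nonneg ht (hν i).le))
    (by rw [dotProduct_add, dotProduct_smul, smul_eq_mul, div_mul_cancel₀ _ hβν.ne']; ring)
  rwa [map_add, map_smul, hrν, smul_zero, add_zero] at h

lemma add_linearCombination_mem_interior_convexHull [TopologicalSpace E] [IsTopologicalAddGroup E]
    [ContinuousSMul ℝ E] [T2Space E] [Nonempty ι] (hβ : ∀ i, 0 < β i)
    (hν : ∀ i, 0 < ν i) (hrν : Fintype.linearCombination ℝ r ν = 0)
    (hr : Function.Surjective (Fintype.linearCombination ℝ r)) (hw : ∀ i, 0 ≤ w i)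
    (hβw : β ⬝ᵥ w < 1) :
    f + Fintype.linearCombination ℝ r w ∈
      interior (convexHull ℝ (range fun i => f + (β i)⁻¹ • r i)) := by
  have : FiniteDimensional ℝ E := Module.Finite.of_surjective _ hr
  set U : Set (ι → ℝ) := {u | (∀ i, 0 < u i) ∧ β ⬝ᵥ u < 1}
  have hU : IsOpen U := by
    simp only [U, ofPred_and, ofPred_forall]
    exact (isOpen_iInter_of_finite fun i => isOpen_lt continuous_const (continuous_apply i)).inter
      (isOpen_lt (by fun_prop) continuous_const)
  have hβν : 0 < β ⬝ᵥ ν :=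
    Finset.sum_pos (fun i _ => mul_pos (hβ i) (hν i)) Finset.univ_nonempty
  set t := (1 - β ⬝ᵥ w) / (2 * β ⬝ᵥ ν)
  have ht : 0 < t := div_pos (sub_pos.2 hβw) (by positivity)
  have hwt : w + t • ν ∈ U := by
    refine ⟨fun i => add_pos_of_nonneg_of_pos (hw i) (mul_pos ht (hν i)), ?_⟩
    rw [dotProduct_add, dotProduct_smul, smul_eq_mul, div_mul_eq_mul_div,
      mul_div_mul_right _ _ hβν.ne']
    linarith
  have hopen : IsOpenMap fun u => f + Fintype.linearCombination ℝ r u :=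
    (Homeomorph.addLeft f).isOpenMap.comp (LinearMap.isOpenMap_of_finiteDimensional _ hr)
  refine interior_maximal ?_ (hopen U hU) ⟨w + t • ν, hwt, by simp [hrν]⟩
  rintro _ ⟨u, hu, rfl⟩
  exact add_linearCombination_mem_convexHull_of_le hβ hν hrν (fun i => (hu.1 i).le) hu.2.le

end Hull

lemma exists_mem_extremePoints_le_of_isCompact {E : Type*} [AddCommGroup E] [Module ℝ E]
    [TopologicalSpace E] [T2Space E] [IsTopologicalAddGroup E] [ContinuousSMul ℝ E]
    [LocallyConvexSpace ℝ E] {S : Set E} (hS : IsClosed S) (ℓ : E →L[ℝ] ℝ) {p : E} (hp : p ∈ S)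
    (hK : IsCompact {q ∈ S | ℓ q ≤ ℓ p}) : ∃ q ∈ S.extremePoints ℝ, ℓ q ≤ ℓ p := by
  obtain ⟨q₀, hq₀, hmin⟩ := hK.exists_isMinOn ⟨p, hp, le_rfl⟩ ℓ.continuous.continuousOn
  have hF : IsExposed ℝ S ((-ℓ).toExposed S) := ContinuousLinearMap.toExposed.isExposed
  have hq₀F : q₀ ∈ (-ℓ).toExposed S := by
    refine ⟨hq₀.1, fun y hy => neg_le_neg ?_⟩
    rcases le_or_gt (ℓ y) (ℓ p) with hyp | hyp
    · exact hmin ⟨hy, hyp⟩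
    · exact hq₀.2.trans hyp.le
  have hFK : (-ℓ).toExposed S ⊆ {q ∈ S | ℓ q ≤ ℓ p} := fun q hq =>
    ⟨hq.1, (neg_le_neg_iff.1 (hq.2 q₀ hq₀.1)).trans hq₀.2⟩
  obtain ⟨q, hq⟩ := (hK.of_isClosed_subset (hF.isClosed hS) hFK).extremePoints_nonempty ⟨q₀, hq₀F⟩
  exact ⟨q, hF.isExtreme.extremePoints_subset_extremePoints hq, (hFK hq.1).2⟩

section Relaxation

variable {k : ℕ} (r : Fin k → Pt) (f : Pt) {β : Fin k → ℝ}

lemma isClosed_relaxP : IsClosed (relaxP k r f) := by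
  simp only [relaxP, ofPred_and, ofPred_forall]
  exact (isClosed_iInter fun i => isClosed_le continuous_const (by fun_prop)).inter
    (isClosed_eq (by fun_prop) (by fun_prop))

lemma isCompact_relaxP_inter_dotProduct_le (hβ : ∀ i, 0 < β i) (t : ℝ) :
    IsCompact (relaxP k r f ∩ {p | β ⬝ᵥ p.2 ≤ t}) := by
  refine ((isCompact_univ_pi fun i => isCompact_Icc (a := 0) (b := t / β i)).image
    (f := fun s => (f + ∑ i, s i • r i, s)) (by fun_prop)).of_isClosed_subset
    ((isClosed_relaxP r f).inter (isClosed_le (by fun_prop) continuous_const)) ?_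
  rintro ⟨x, s⟩ ⟨⟨hs, hx⟩, hst⟩
  refine ⟨s, fun i _ => ⟨hs i, (le_div_iff₀' (hβ i)).2 (le_trans ?_ hst)⟩, Prod.ext hx.symm rfl⟩
  exact Finset.single_le_sum (f := fun j => β j * s j) (fun j _ => mul_nonneg (hβ j).le (hs j))
    (Finset.mem_univ i)

variable {r f}

lemma one_le_dotProduct_of_extremePoints_notMem_interior [NeZero k]
    (hr : coneGen (range r) = univ) (hβ : ∀ i, 0 < β i) {S : Set (Pt × (Fin k → ℝ))}
    (hS : IsClosed S) (hSP : S ⊆ relaxP k r f)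
    (hext : ∀ p ∈ S.extremePoints ℝ,
      p.1 ∉ interior (convexHull ℝ (range fun i => f + (β i)⁻¹ • r i))) :
    ∀ p ∈ S, 1 ≤ β ⬝ᵥ p.2 := by
  intro p hp
  by_contra! hlt
  let ℓ : Pt × (Fin k → ℝ) →L[ℝ] ℝ :=
    LinearMap.toContinuousLinearMap ((dotProductBilin ℝ ℝ β).comp (LinearMap.snd ℝ Pt _))
  obtain ⟨q, hq, hqp⟩ := exists_mem_extremePoints_le_of_isCompact hS ℓ hp
    ((isCompact_relaxP_inter_dotProduct_le r f hβ _).of_isClosed_subset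
      (hS.inter (isClosed_le ℓ.continuous continuous_const)) fun q hq => ⟨hSP hq.1, hq.2⟩)
  obtain ⟨hq0, hq1⟩ := hSP hq.1
  obtain ⟨ν, hν, hrν⟩ := exists_pos_linearCombination_eq_zero_of_coneGen_eq_univ hr
  refine hext q hq ?_
  rw [hq1, ← Fintype.linearCombination_apply]
  exact add_linearCombination_mem_interior_convexHull hβ hν hrν
    (surjective_linearCombination_of_coneGen_eq_univ hr) hq0 (hqp.trans_lt hlt)

end Relaxation

theorem three_var_disjunction_validity_general
    (r : Fin 3 → Pt) (f : Pt)
    (hcone : coneGen (Set.range r) = Set.univ)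
    (α : Fin 3 → ℝ)
    (β : Fin 3 → ℝ) (hβ : ∀ i, 0 < β i)
    (Lβ : Set Pt)
    (hLβ : Lβ = convexHull ℝ (Set.range fun i => f + (β i)⁻¹ • r i))
    (π : Fin 2 → ℤ) (π₀ : ℤ)
    (Q Qle Qge : Set (Pt × (Fin 3 → ℝ)))
    (hQ : Q = {p | (∀ i, 0 ≤ p.2 i) ∧ p.1 = f + ∑ i, p.2 i • r i ∧
      1 ≤ ∑ i, α i * p.2 i})
    (hQle : Qle = Q ∩ {p | ∑ j, (π j : ℝ) * p.1 j ≤ (π₀ : ℝ)})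
    (hQge : Qge = Q ∩ {p | (π₀ : ℝ) + 1 ≤ ∑ j, (π j : ℝ) * p.1 j})
    (hext : ∀ p : Pt × (Fin 3 → ℝ),
      (p ∈ Set.extremePoints ℝ Qle ∨ p ∈ Set.extremePoints ℝ Qge) →
      p.1 ∉ interior Lβ) :
    ∀ p ∈ convexHull ℝ (Qle ∪ Qge), 1 ≤ ∑ i, β i * p.2 i := by
  have hQP : Q = relaxP 3 r f ∩ {p | 1 ≤ α ⬝ᵥ p.2} := hQ.trans (ext fun _ => and_assoc.symm)
  have hQc : IsClosed Q :=
    hQP ▸ (isClosed_relaxP r f).inter (isClosed_le continuous_const (by fun_prop))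
  have hvalid : ∀ S ⊆ Q, IsClosed S → (∀ p ∈ S.extremePoints ℝ, p.1 ∉ interior Lβ) →
      ∀ p ∈ S, 1 ≤ β ⬝ᵥ p.2 := fun S hSQ hS hSext =>
    one_le_dotProduct_of_extremePoints_notMem_interior hcone hβ hS
      (hSQ.trans (hQP ▸ inter_subset_left)) (hLβ ▸ hSext)
  have hle := hvalid Qle (hQle ▸ inter_subset_left)
    (hQle ▸ hQc.inter (isClosed_le (by fun_prop) continuous_const)) fun p hp => hext p (.inl hp)
  have hge := hvalid Qge (hQge ▸ inter_subset_left)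
    (hQge ▸ hQc.inter (isClosed_le continuous_const (by fun_prop))) fun p hp => hext p (.inr hp)
  exact fun p hp => convexHull_min (union_subset hle hge)
    (convex_halfSpace_ge ((dotProductBilin ℝ ℝ β).comp (LinearMap.snd ℝ Pt _)).isLinear 1) hp

theorem three_var_disjunction_validity
    (r : Fin 3 → Pt) (f : Pt)
    (hr_rat : ∀ i, IsRatPt (r i)) (hr_ne : ∀ i, r i ≠ 0)
    (hf_rat : IsRatPt f) (hf_int : ¬ IsIntPt f)
    (hcone : coneGen (Set.range r) = Set.univ)
    (α : Fin 3 → ℝ) (hα : ∀ i, 0 ≤ α i)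
    (β : Fin 3 → ℝ) (hβ : ∀ i, 0 < β i)
    (Lβ : Set Pt)
    (hLβ : Lβ = convexHull ℝ (Set.range fun i => f + (β i)⁻¹ • r i))
    (π : Fin 2 → ℤ) (hπ : π ≠ 0) (π₀ : ℤ)
    (Q Qle Qge : Set (Pt × (Fin 3 → ℝ)))
    (hQ : Q = {p | (∀ i, 0 ≤ p.2 i) ∧ p.1 = f + ∑ i, p.2 i • r i ∧
      1 ≤ ∑ i, α i * p.2 i})
    (hQle : Qle = Q ∩ {p | ∑ j, (π j : ℝ) * p.1 j ≤ (π₀ : ℝ)})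
    (hQge : Qge = Q ∩ {p | (π₀ : ℝ) + 1 ≤ ∑ j, (π j : ℝ) * p.1 j})
    (hext : ∀ p : Pt × (Fin 3 → ℝ),
      (p ∈ Set.extremePoints ℝ Qle ∨ p ∈ Set.extremePoints ℝ Qge) →
      p.1 ∉ interior Lβ) :
    ∀ p ∈ convexHull ℝ (Qle ∪ Qge), 1 ≤ ∑ i, β i * p.2 i :=
  three_var_disjunction_validity_general r f hcone α β hβ Lβ hLβ π π₀ Q Qle Qge hQ hQle hQge hext
end

section
/- Let a, e ∈ ℝ with a > 1 and e > 1, and set C := min{1, (1 − 1/a)·e}. Let (cₙ)_{n≥0} be the real sequence defined by any c₀ with 0 < c₀ < 1 and c₀ < (1 − 1/a)·e, and the recursion cₙ₊₁ := (a − 1)/(a − (e − 1)/(e − cₙ)). Then the recursion is well-defined (for every n, e − cₙ > 0 and a − (e−1)/(e−cₙ) > 0), the sequence (cₙ) is non-decreasing, cₙ ≤ 1 and cₙ ≤ (1 − 1/a)·e for all n, and cₙ converges to C as n → ∞. -/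
/-!
Write `m := min 1 ((1 - 1/a) e)` and `f x := (a - 1) / (a - (e - 1)/(e - x))`. For `x ≤ m` one has
`a (e - x) - (e - 1) ≥ 1`, so `f x = (a - 1)(e - x) / (a (e - x) - (e - 1))` is well defined, and
clearing this denominator turns `x ≤ f x ≤ m` into polynomial inequalities; for instance
`f x - x` has the sign of `(1 - x)((a - 1) e - a x)`. Hence `cₙ` increases, stays below `m`, and
converges to a fixed point of `f` that is at most `m`. The fixed points are the roots
of `(x - 1)(a x - (a - 1) e)`, i.e. `1` and `(1 - 1/a) e`, and the only one of them that is at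
most `m` is `m`.
-/

open Filter Topology Set

section Orbit

variable {α : Type*} {f : α → α} {c : ℕ → α}

lemma orbit_mem_of_mapsTo {s : Set α} (hf : MapsTo f s s) (h0 : c 0 ∈ s)
    (hrec : ∀ n, c (n + 1) = f (c n)) (n : ℕ) : c n ∈ s := by
  induction n with
  | zero => exact h0
  | succ n ih => exact hrec n ▸ hf ih

lemma monotone_orbit_of_le_apply [Preorder α] {s : Set α} (hf : MapsTo f s s)
    (hle : ∀ x ∈ s, x ≤ f x) (h0 : c 0 ∈ s) (hrec : ∀ n, c (n + 1) = f (c n)) :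
    Monotone c :=
  monotone_nat_of_le_succ fun n => hrec n ▸ hle _ (orbit_mem_of_mapsTo hf h0 hrec n)

lemma isFixedPt_of_tendsto_orbit [TopologicalSpace α] [T2Space α] {L : α}
    (hc : Tendsto c atTop (𝓝 L)) (hf : ContinuousAt f L) (hrec : ∀ n, c (n + 1) = f (c n)) :
    f L = L := by
  have hshift : Tendsto (fun n => f (c n)) atTop (𝓝 L) :=
    (hc.comp (tendsto_add_atTop_nat 1)).congr hrec
  exact tendsto_nhds_unique (hf.tendsto.comp hc) hshift

end Orbit

noncomputable def recMap (a e x : ℝ) : ℝ := (a - 1) / (a - (e - 1) / (e - x))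

namespace recMap

variable {a e x : ℝ}

lemma le_bound_iff (ha : 0 < a) : x ≤ (1 - 1 / a) * e ↔ a * x ≤ (a - 1) * e := by
  rw [← mul_le_mul_iff_of_pos_left ha]
  field_simp

lemma one_le_denom (hx : a * x ≤ (a - 1) * e) : 1 ≤ a * (e - x) - (e - 1) := by
  linarith

lemma sub_pos_of_mul_le (ha : 0 < a) (he : 0 < e) (hx : a * x ≤ (a - 1) * e) : 0 < e - x := by
  by_contra! h
  nlinarith [one_le_denom hx]

lemma inner_eq (hx : e - x ≠ 0) : a - (e - 1) / (e - x) = (a * (e - x) - (e - 1)) / (e - x) := by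
  field_simp

lemma eq_div (hx : e - x ≠ 0) :
    recMap a e x = (a - 1) * (e - x) / (a * (e - x) - (e - 1)) := by
  rw [recMap, inner_eq hx, div_div_eq_mul_div]

lemma mul_le (ha : 1 ≤ a) (he : 1 ≤ e) (hx : a * x ≤ (a - 1) * e) :
    a * recMap a e x ≤ (a - 1) * e := by
  have hD := one_le_denom hx
  rw [eq_div (sub_pos_of_mul_le (by linarith) (by linarith) hx).ne', mul_div_assoc',
    div_le_iff₀ (by linarith)]
  -- the difference of the two sides is `(a - 1)(e - 1)(a (e - x) - e)`
  nlinarith [mul_nonneg (mul_nonneg (sub_nonneg.2 ha) (sub_nonneg.2 he))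
    (by linarith : (0 : ℝ) ≤ a * (e - x) - e)]

variable (ha : 0 < a) (he : 0 < e) (hx : a * x ≤ (a - 1) * e)
include ha he hx

lemma inner_pos : 0 < a - (e - 1) / (e - x) := by
  have hex := sub_pos_of_mul_le ha he hx
  rw [inner_eq hex.ne']
  exact div_pos (by linarith [one_le_denom hx]) hex

lemma continuousAt : ContinuousAt (recMap a e) x := by
  have hex := sub_pos_of_mul_le ha he hx
  exact continuousAt_const.div (continuousAt_const.sub (continuousAt_const.div
    (continuousAt_const.sub continuousAt_id) hex.ne')) (inner_pos ha he hx).ne'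

lemma le_one (hx1 : x ≤ 1) : recMap a e x ≤ 1 := by
  rw [eq_div (sub_pos_of_mul_le ha he hx).ne', div_le_one (by linarith [one_le_denom hx])]
  nlinarith

lemma self_le (hx1 : x ≤ 1) : x ≤ recMap a e x := by
  rw [eq_div (sub_pos_of_mul_le ha he hx).ne', le_div_iff₀ (by linarith [one_le_denom hx])]
  nlinarith [mul_nonneg (sub_nonneg.2 hx1) (sub_nonneg.2 hx)]

lemma eq_one_or_mul_eq_of_fixed (hfix : recMap a e x = x) : x = 1 ∨ a * x = (a - 1) * e := by
  have hD := one_le_denom hx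
  rw [eq_div (sub_pos_of_mul_le ha he hx).ne', div_eq_iff (by linarith)] at hfix
  have hprod : (x - 1) * (a * x - (a - 1) * e) = 0 := by linear_combination hfix
  rcases mul_eq_zero.1 hprod with h | h
  · exact Or.inl (by linarith)
  · exact Or.inr (by linarith)

end recMap

lemma mul_le_of_le_min {a e x : ℝ} (ha : 0 < a) (hx : x ≤ min 1 ((1 - 1 / a) * e)) :
    a * x ≤ (a - 1) * e :=
  (recMap.le_bound_iff ha).1 (le_min_iff.1 hx).2

variable {a e x : ℝ}

lemma mapsTo_recMap_Iic (ha : 1 ≤ a) (he : 1 ≤ e) :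
    MapsTo (recMap a e) (Iic (min 1 ((1 - 1 / a) * e))) (Iic (min 1 ((1 - 1 / a) * e))) :=
  fun x hx => by
    have hx' := mul_le_of_le_min (by linarith) hx
    exact le_min (recMap.le_one (by linarith) (by linarith) hx' (le_min_iff.1 hx).1)
      ((recMap.le_bound_iff (by linarith)).2 (recMap.mul_le ha he hx'))

section FixedPoint

variable (ha : 0 < a) (he : 0 < e) (hx : x ≤ min 1 ((1 - 1 / a) * e))
include ha he hx

lemma le_recMap_of_le_min : x ≤ recMap a e x :=
  recMap.self_le ha he (mul_le_of_le_min ha hx) (le_min_iff.1 hx).1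

lemma eq_min_of_recMap_eq (hfix : recMap a e x = x) : x = min 1 ((1 - 1 / a) * e) := by
  refine le_antisymm hx ?_
  rcases recMap.eq_one_or_mul_eq_of_fixed ha he (mul_le_of_le_min ha hx) hfix with h | h
  · exact h ▸ min_le_left _ _
  · have hxM : x = (1 - 1 / a) * e := by
      field_simp
      linarith
    exact hxM ▸ min_le_right _ _

end FixedPoint

theorem recursion_converges_general (a e : ℝ) (ha : 1 < a) (he : 1 < e)
    (c : ℕ → ℝ)
    (hc0_lt1 : c 0 < 1) (hc0_lt : c 0 < (1 - 1 / a) * e)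
    (hrec : ∀ n, c (n + 1) = (a - 1) / (a - (e - 1) / (e - c n))) :
    (∀ n, 0 < e - c n ∧ 0 < a - (e - 1) / (e - c n)) ∧
    Monotone c ∧
    (∀ n, c n ≤ 1 ∧ c n ≤ (1 - 1 / a) * e) ∧
    Filter.Tendsto c Filter.atTop (nhds (min 1 ((1 - 1 / a) * e))) := by
  have ha0 : 0 < a := by linarith
  have he0 : 0 < e := by linarith
  have hrec' : ∀ n, c (n + 1) = recMap a e (c n) := hrec
  have hmaps := mapsTo_recMap_Iic ha.le he.le
  have h0 : c 0 ∈ Iic (min 1 ((1 - 1 / a) * e)) := le_min hc0_lt1.le hc0_lt.le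
  have hmem := orbit_mem_of_mapsTo hmaps h0 hrec'
  have hmul n : a * c n ≤ (a - 1) * e := mul_le_of_le_min ha0 (hmem n)
  have hmono := monotone_orbit_of_le_apply hmaps (fun _ => le_recMap_of_le_min ha0 he0) h0 hrec'
  have hL := tendsto_atTop_ciSup hmono ⟨_, forall_mem_range.2 hmem⟩
  have hLm : ⨆ n, c n ≤ min 1 ((1 - 1 / a) * e) := ciSup_le hmem
  have hfix := isFixedPt_of_tendsto_orbit hL
    (recMap.continuousAt ha0 he0 (mul_le_of_le_min ha0 hLm)) hrec'
  refine ⟨fun n => ⟨recMap.sub_pos_of_mul_le ha0 he0 (hmul n),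
    recMap.inner_pos ha0 he0 (hmul n)⟩, hmono, fun n => le_min_iff.1 (hmem n), ?_⟩
  rwa [← eq_min_of_recMap_eq ha0 he0 hLm hfix]

theorem recursion_converges (a e : ℝ) (ha : 1 < a) (he : 1 < e)
    (c : ℕ → ℝ)
    (hc0_pos : 0 < c 0) (hc0_lt1 : c 0 < 1) (hc0_lt : c 0 < (1 - 1 / a) * e)
    (hrec : ∀ n, c (n + 1) = (a - 1) / (a - (e - 1) / (e - c n))) :
    (∀ n, 0 < e - c n ∧ 0 < a - (e - 1) / (e - c n)) ∧
    Monotone c ∧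
    (∀ n, c n ≤ 1 ∧ c n ≤ (1 - 1 / a) * e) ∧
    Filter.Tendsto c Filter.atTop (nhds (min 1 ((1 - 1 / a) * e))) :=
  recursion_converges_general a e ha he c hc0_lt1 hc0_lt hrec
end
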